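/- arXiv:0805.1457 — 6 statements merged into one kernel-verified Lean document; each statement's English description precedes it below -/
import Mathlib

section
/- Fix locations q,q' of A and regions r,r' with respect to the constants a_0 < … < a_n < a_{n+1} = +∞ (regions are the singletons {a_i} and the open intervals (a_i,a_{i+1})), and assume each a_i (i ≤ n) is an integral multiple of 1/g for some positive integer g that is a power of C. Then for x ∈ r, the set of costs of paths in TTS_A going from (q,x) to some state (q',β) with β ∈ r' is of the form ⋃_{m∈ℕ} ⟨α_m − β_m·x, α'_m − β'_m·x⟩ (each term an interval, possibly with β_m = 0 and/or β'_m = 0 and/or α'_m = +∞), where every α_m and α'_m is an integral multiple of 1/g or +∞, and every β_m and β'_m is either 0 or the cost rate of some location of A. Moreover, if r = (a_n,+∞), then β_m = β'_m = 0 for all m. -/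
/-! ## One-clock priced timed automata: common definitions -/

/-- Comparison operators used in clock constraints and cost constraints. -/
inductive Cmp
  | lt | le | eq | ge | gt
  deriving DecidableEq

/-- Satisfaction of `x ∼ c`. -/
def Cmp.sat : Cmp → ℝ → ℝ → Prop
  | .lt, x, c => x < c
  | .le, x, c => x ≤ c
  | .eq, x, c => x = c
  | .ge, x, c => c ≤ x
  | .gt, x, c => c < x

/-- A guard (clock constraint) is a finite conjunction of constraints `x ∼ c`, `c ∈ ℕ`. -/
abbrev PGuard := List (Cmp × ℕ)

/-- A clock value satisfies a guard if it satisfies all its atomic constraints. -/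
def PGuard.sat (g : PGuard) (x : ℝ) : Prop := ∀ p ∈ g, Cmp.sat p.1 x (p.2 : ℝ)

/-- A transition of a one-clock priced timed automaton: source, guard, reset set
(`reset = true` iff the clock is reset), target, and discrete cost. -/
structure PTrans (Q : Type) where
  src : Q
  guard : PGuard
  reset : Bool
  tgt : Q
  dcost : ℕ

/-- A one-clock priced timed automaton with a single cost function:
a finite set `Q` of locations, an initial location, a finite set of transitions,
invariants, and a cost rate for each location (discrete costs are on transitions). -/
structure PTA (Q : Type) [Fintype Q] where
  init : Q
  E : Set (PTrans Q)
  finE : E.Finite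
  Inv : Q → PGuard
  rate : Q → ℕ

variable {Q : Type} [Fintype Q]

/-- A delay move `(q,v) → (q,v+t)` of cost `t · rate q`, allowed if the invariant
holds throughout. -/
def DelayMove (A : PTA Q) (s : Q × ℝ) (c : ℝ) (s' : Q × ℝ) : Prop :=
  ∃ t : ℝ, 0 ≤ t ∧ s' = (s.1, s.2 + t) ∧ c = t * (A.rate s.1 : ℝ) ∧
    ∀ t' : ℝ, 0 ≤ t' → t' ≤ t → PGuard.sat (A.Inv s.1) (s.2 + t')

/-- A discrete move via a transition of `A`, of cost the discrete cost of the transition. -/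
def DiscMove (A : PTA Q) (s : Q × ℝ) (c : ℝ) (s' : Q × ℝ) : Prop :=
  ∃ e ∈ A.E, e.src = s.1 ∧ e.tgt = s'.1 ∧ PGuard.sat e.guard s.2 ∧
    s'.2 = (if e.reset then 0 else s.2) ∧ PGuard.sat (A.Inv e.tgt) s'.2 ∧ c = (e.dcost : ℝ)

/-- A simple move of the timed transition system `TTS_A`. -/
def PMove (A : PTA Q) (s : Q × ℝ) (c : ℝ) (s' : Q × ℝ) : Prop :=
  DelayMove A s c s' ∨ DiscMove A s c s'

/-- `PPath A s c s'`: there is a path (finite sequence of simple moves) in `TTS_A`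
from `s` to `s'` of total cost `c`. -/
inductive PPath (A : PTA Q) : (Q × ℝ) → ℝ → (Q × ℝ) → Prop
  | refl (s : Q × ℝ) : PPath A s 0 s
  | step {s s' s'' : Q × ℝ} {c c' : ℝ} :
      PMove A s c s' → PPath A s' c' s'' → PPath A s (c + c') s''

/-- Reachability in `TTS_A` (notation `⇝*` in the paper). -/
def PReach (A : PTA Q) (s s' : Q × ℝ) : Prop := ∃ c : ℝ, PPath A s c s'

/-- A mixed move: a delay move followed by a discrete move. -/
def MixedMove (A : PTA Q) (s : Q × ℝ) (c : ℝ) (s' : Q × ℝ) : Prop :=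
  ∃ (c₁ c₂ : ℝ) (m : Q × ℝ), DelayMove A s c₁ m ∧ DiscMove A m c₂ s' ∧ c = c₁ + c₂

/-- A priced timed automaton is non-blocking. -/
def NonBlocking (A : PTA Q) : Prop :=
  ∀ (q : Q) (v : ℝ), 0 ≤ v → ∃ (c : ℝ) (s' : Q × ℝ), MixedMove A (q, v) c s'

/-- The constants appearing in the clock constraints (guards and invariants) of `A`. -/
def PTA.consts (A : PTA Q) : Set ℕ :=
  {c | (∃ e ∈ A.E, ∃ p ∈ e.guard, p.2 = c) ∨ ∃ q : Q, ∃ p ∈ A.Inv q, p.2 = c}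

/-- The lcm of all positive cost rates labeling a location of `A`. -/
def posLcm (A : PTA Q) : ℕ :=
  Finset.lcm (Finset.univ.filter fun q => 0 < A.rate q) A.rate

/-! ## Regions and intervals -/

/-- The regions determined by the constants `a 0 < a 1 < … < a n` (with `a (n+1) = +∞`):
the singletons `{a i}`, the open intervals `(a i, a (i+1))`, and `(a n, +∞)`. -/
def Regions (a : ℕ → ℝ) (n : ℕ) : Set (Set ℝ) :=
  {r | (∃ i ≤ n, r = {a i}) ∨ (∃ i < n, r = Set.Ioo (a i) (a (i + 1))) ∨ r = Set.Ioi (a n)}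

/-- Shapes of intervals: closed/open at each end, `ci`/`oi` being right-unbounded. -/
inductive IShape
  | cc | co | oc | oo | ci | oi
  deriving DecidableEq

/-- The interval of the given shape with the given (left, right) endpoints
(the right endpoint is ignored for the right-unbounded shapes `ci` and `oi`). -/
def mkInterval : IShape → ℝ → ℝ → Set ℝ
  | .cc, l, r => Set.Icc l r
  | .co, l, r => Set.Ico l r
  | .oc, l, r => Set.Ioc l r
  | .oo, l, r => Set.Ioo l r
  | .ci, l, _ => Set.Ici l
  | .oi, l, _ => Set.Ioi l


/-!
Induction on paths, prepending one move at a time. For every path from `(q, x)`, `x ∈ r`, into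
`r'` we build an interval with endpoints `α - β w` (`α ∈ (1/g)ℤ`, `β` zero or a rate) that
contains the cost of the path at `w = x` and consists, for every `w ∈ r`, of costs of paths from
`(q, w)` into `r'`: guards cannot tell the clock values of one region apart.

A delay at rate `ρ` from `w` into a window of clock values `t` turns such intervals `I t` into
`⋃ t, (I t + ρ (t - w))`. The endpoints are affine in `t` and the window is convex, so this union
is again an interval, with endpoints taken at an end of the window: a constant `a i`, or `w`
itself. Integral rates keep the intercepts in `(1/g)ℤ`, and the slopes stay among `0` and the
rates; in the unbounded region the only end of a window is `w`, which keeps the slopes `0`.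
There are countably many such intervals, and the cost set is the union of those that are sound.
-/

open Set

def LeOrLt : Bool → ℝ → ℝ → Prop
  | true, u, v => u ≤ v
  | false, u, v => u < v

section LeOrLt

variable {b b' : Bool} {u v w y z c k : ℝ}

@[simp] lemma leOrLt_true : LeOrLt true u v ↔ u ≤ v := Iff.rfl

@[simp] lemma leOrLt_false : LeOrLt false u v ↔ u < v := Iff.rfl

lemma LeOrLt.le (h : LeOrLt b u v) : u ≤ v := by
  cases b
  exacts [h.le, h]

lemma leOrLt_of_lt (h : u < v) : LeOrLt b u v := by
  cases b
  exacts [h, h.le]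

lemma leOrLt_refl (u : ℝ) : LeOrLt true u u := le_refl u

lemma LeOrLt.trans_le (h : LeOrLt b u v) (h' : v ≤ w) : LeOrLt b u w := by
  cases b
  exacts [h.trans_le h', h.trans h']

lemma LE.le.trans_leOrLt (h : u ≤ v) (h' : LeOrLt b v w) : LeOrLt b u w := by
  cases b
  exacts [h.trans_lt h', h.trans h']

lemma LeOrLt.trans (h : LeOrLt b u v) (h' : LeOrLt b' v w) : LeOrLt (b && b') u w := by
  cases b <;> cases b' <;> simp only [Bool.and_true, Bool.and_false, leOrLt_true,
    leOrLt_false] at * <;> linarith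

lemma LeOrLt.le_of_not_leOrLt (h : LeOrLt b y v) (h' : ¬ LeOrLt b z v) : y ≤ z := by
  cases b <;> simp only [leOrLt_true, leOrLt_false, not_le, not_lt] at h h' <;> linarith

lemma LeOrLt.le_of_not_leOrLt' (h : LeOrLt b v y) (h' : ¬ LeOrLt b v z) : z ≤ y := by
  cases b <;> simp only [leOrLt_true, leOrLt_false, not_le, not_lt] at h h' <;> linarith

lemma leOrLt_neg_iff : LeOrLt b (-v) (-u) ↔ LeOrLt b u v := by
  cases b <;> simp

lemma leOrLt_add_iff_le_sub : LeOrLt b (u + c) z ↔ LeOrLt b u (z - c) := by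
  cases b
  exacts [lt_sub_iff_add_lt.symm, le_sub_iff_add_le.symm]

lemma leOrLt_sub_iff_le_add : LeOrLt b (z - c) u ↔ LeOrLt b z (u + c) := by
  cases b
  exacts [sub_lt_iff_lt_add, sub_le_iff_le_add]

lemma leOrLt_add_mul_iff_of_pos (hk : 0 < k) :
    LeOrLt b (c + k * u) (c + k * v) ↔ LeOrLt b u v := by
  cases b
  · simpa using mul_lt_mul_iff_right₀ hk
  · simpa using mul_le_mul_iff_right₀ hk

lemma LeOrLt.convexComb {u₁ v₁ u₂ v₂ θ₁ θ₂ : ℝ} (h₁ : LeOrLt b u₁ v₁) (h₂ : LeOrLt b u₂ v₂)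
    (hθ₁ : 0 ≤ θ₁) (hθ₂ : 0 ≤ θ₂) (hθ : θ₁ + θ₂ = 1) :
    LeOrLt b (θ₁ * u₁ + θ₂ * u₂) (θ₁ * v₁ + θ₂ * v₂) := by
  cases b
  · rcases hθ₁.eq_or_lt with rfl | hθ₁
    · rw [zero_add] at hθ
      subst hθ
      simpa using h₂
    · exact add_lt_add_of_lt_of_le (mul_lt_mul_of_pos_left h₁ hθ₁)
        (mul_le_mul_of_nonneg_left h₂.le hθ₂)
  · exact add_le_add (mul_le_mul_of_nonneg_left h₁ hθ₁) (mul_le_mul_of_nonneg_left h₂ hθ₂)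

end LeOrLt

section Extremum

variable {f : ℝ → ℝ} {T : Set ℝ} {m c k : ℝ} {b bm : Bool}

def IsInfOn (f : ℝ → ℝ) (T : Set ℝ) (m : ℝ) (attained : Bool) : Prop :=
  (∀ t ∈ T, LeOrLt attained m (f t)) ∧ (attained → ∃ t ∈ T, f t = m) ∧
    ∀ ε > 0, ∃ t ∈ T, f t < m + ε

def IsSupOn (f : ℝ → ℝ) (T : Set ℝ) (m : ℝ) (attained : Bool) : Prop :=
  (∀ t ∈ T, LeOrLt attained (f t) m) ∧ (attained → ∃ t ∈ T, f t = m) ∧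
    ∀ ε > 0, ∃ t ∈ T, m - ε < f t

lemma isSupOn_iff_isInfOn_neg : IsSupOn f T m b ↔ IsInfOn (fun t => -f t) T (-m) b := by
  simp only [IsSupOn, IsInfOn, leOrLt_neg_iff, neg_inj]
  refine and_congr_right' (and_congr_right' (forall₂_congr fun ε _ =>
    exists_congr fun t => and_congr_right fun _ => ?_))
  constructor <;> intro <;> linarith

lemma IsInfOn.setOf_exists_leOrLt (h : IsInfOn f T m bm) (b : Bool) :
    {z | ∃ t ∈ T, LeOrLt b (f t) z} = {z | LeOrLt (bm && b) m z} := by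
  obtain ⟨hle, hmem, happrox⟩ := h
  ext z
  refine ⟨fun ⟨t, ht, hz⟩ => (hle t ht).trans hz, fun hz => ?_⟩
  cases bm
  · obtain ⟨t, ht, hlt⟩ := happrox (z - m) (by simpa using hz)
    exact ⟨t, ht, leOrLt_of_lt (by linarith)⟩
  · obtain ⟨t, ht, rfl⟩ := hmem rfl
    exact ⟨t, ht, by simpa using hz⟩

lemma IsSupOn.setOf_exists_leOrLt (h : IsSupOn f T m bm) (b : Bool) :
    {z | ∃ t ∈ T, LeOrLt b z (f t)} = {z | LeOrLt (b && bm) z m} := by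
  obtain ⟨hle, hmem, happrox⟩ := h
  ext z
  refine ⟨fun ⟨t, ht, hz⟩ => hz.trans (hle t ht), fun hz => ?_⟩
  cases bm
  · obtain ⟨t, ht, hlt⟩ := happrox (m - z) (by simpa using hz)
    exact ⟨t, ht, leOrLt_of_lt (by linarith)⟩
  · obtain ⟨t, ht, rfl⟩ := hmem rfl
    exact ⟨t, ht, by simpa using hz⟩

lemma setOf_exists_leOrLt_eq_univ (h : ∀ M, ∃ t ∈ T, M < f t) (b : Bool) :
    {z | ∃ t ∈ T, LeOrLt b z (f t)} = univ :=
  eq_univ_of_forall fun z => (h z).imp fun _ ⟨ht, hz⟩ => ⟨ht, leOrLt_of_lt hz⟩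

lemma IsInfOn.affine_of_pos {g : ℝ → ℝ} (h : IsInfOn g T m b) (hf : ∀ t, f t = c + k * g t)
    (hk : 0 < k) : IsInfOn f T (c + k * m) b := by
  obtain ⟨hle, hmem, happrox⟩ := h
  refine ⟨fun t ht => ?_, fun hb => (hmem hb).imp fun t ⟨ht, hm⟩ => ⟨ht, by rw [hf, hm]⟩,
    fun ε hε => ?_⟩
  · rw [hf, leOrLt_add_mul_iff_of_pos hk]
    exact hle t ht
  · obtain ⟨t, ht, hlt⟩ := happrox (ε / k) (div_pos hε hk)
    have := (lt_div_iff₀' hk).1 (sub_left_lt_of_lt_add hlt)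
    exact ⟨t, ht, by rw [hf]; linarith⟩

lemma IsSupOn.affine_of_neg {g : ℝ → ℝ} (h : IsSupOn g T m b) (hf : ∀ t, f t = c + k * g t)
    (hk : k < 0) : IsInfOn f T (c + k * m) b := by
  simpa using (isSupOn_iff_isInfOn_neg.1 h).affine_of_pos (k := -k) (fun t => by rw [hf]; ring)
    (neg_pos.2 hk)

lemma IsInfOn.affine_of_neg {g : ℝ → ℝ} (h : IsInfOn g T m b) (hf : ∀ t, f t = c + k * g t)
    (hk : k < 0) : IsSupOn f T (c + k * m) b := by
  have := h.affine_of_pos (f := fun t => -f t) (c := -c) (k := -k) (fun t => by rw [hf]; ring)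
    (neg_pos.2 hk)
  exact isSupOn_iff_isInfOn_neg.2 (by convert this using 1; ring)

lemma IsSupOn.affine_of_pos {g : ℝ → ℝ} (h : IsSupOn g T m b) (hf : ∀ t, f t = c + k * g t)
    (hk : 0 < k) : IsSupOn f T (c + k * m) b := by
  have := (isSupOn_iff_isInfOn_neg.1 h).affine_of_pos (f := fun t => -f t) (c := -c)
    (fun t => by rw [hf]; ring) hk
  exact isSupOn_iff_isInfOn_neg.2 (by convert this using 1; ring)

lemma isInfOn_of_const {g : ℝ → ℝ} (hT : T.Nonempty) (hf : ∀ t, f t = c + k * g t) (hk : k = 0)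
    (m : ℝ) : IsInfOn f T (c + k * m) true := by
  obtain ⟨t₀, ht₀⟩ := hT
  subst hk
  exact ⟨fun t _ => by simp [hf], fun _ => ⟨t₀, ht₀, by simp [hf]⟩,
    fun ε hε => ⟨t₀, ht₀, by simp [hf, hε]⟩⟩

lemma isSupOn_of_const {g : ℝ → ℝ} (hT : T.Nonempty) (hf : ∀ t, f t = c + k * g t) (hk : k = 0)
    (m : ℝ) : IsSupOn f T (c + k * m) true := by
  have := isInfOn_of_const (f := fun t => -f t) (c := -c) hT (fun t => by rw [hf, hk]; ring) rfl m
  exact isSupOn_iff_isInfOn_neg.2 (by simpa [hk] using this)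

lemma exists_lt_of_affine_of_pos (h : ∀ M, ∃ t ∈ T, M < t) (hf : ∀ t, f t = c + k * t)
    (hk : 0 < k) (M : ℝ) : ∃ t ∈ T, M < f t := by
  obtain ⟨t, ht, hlt⟩ := h ((M - c) / k)
  have := (div_lt_iff₀' hk).1 hlt
  exact ⟨t, ht, by rw [hf]; linarith⟩

end Extremum

/-! ### Intervals with endpoints affine in the clock value -/

structure AffineEnd where
  closed : Bool
  α : ℝ
  β : ℝ

namespace AffineEnd

def eval (e : AffineEnd) (w : ℝ) : ℝ := e.α - e.β * w

/- A bound `e` on the cost paid from clock value `t` becomes, after a delay at rate `ρ` from `w`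
to `t`, the bound `(e.delay ρ w).eval t = e.eval t + ρ * (t - w)`; `e.shift ρ E` is that bound
at `t = E.eval w`, again affine in `w`. -/
def delay (ρ w : ℝ) (e : AffineEnd) : AffineEnd := ⟨e.closed, e.α - ρ * w, e.β - ρ⟩

def shift (ρ : ℝ) (e E : AffineEnd) (closed : Bool) : AffineEnd :=
  ⟨closed, e.α + (ρ - e.β) * E.α, (ρ - e.β) * E.β + ρ⟩

@[simp] lemma delay_closed (ρ w : ℝ) (e : AffineEnd) : (e.delay ρ w).closed = e.closed := rfl

@[simp] lemma shift_closed (ρ : ℝ) (e E : AffineEnd) (b : Bool) : (e.shift ρ E b).closed = b :=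
  rfl

lemma delay_eval (e : AffineEnd) (ρ w t : ℝ) :
    (e.delay ρ w).eval t = (e.α - ρ * w) + (ρ - e.β) * t := by
  simp only [eval, delay]
  ring

lemma shift_eval (e E : AffineEnd) (ρ : ℝ) (b : Bool) (w : ℝ) :
    (e.shift ρ E b).eval w = (e.α - ρ * w) + (ρ - e.β) * E.eval w := by
  simp only [eval, shift]
  ring

lemma eval_convexComb (e : AffineEnd) {t₁ t₂ θ₁ θ₂ : ℝ} (hθ : θ₁ + θ₂ = 1) :
    e.eval (θ₁ * t₁ + θ₂ * t₂) = θ₁ * e.eval t₁ + θ₂ * e.eval t₂ := by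
  simp only [eval]
  linear_combination e.α * hθ.symm

end AffineEnd

/-- A family of intervals indexed by the clock value `w`, from `lo.eval w` to `hi.eval w`
(to `+∞` if `hi = none`). -/
structure AffineInterval where
  lo : AffineEnd
  hi : Option AffineEnd

namespace AffineInterval

def eval (I : AffineInterval) (w : ℝ) : Set ℝ :=
  {z | LeOrLt I.lo.closed (I.lo.eval w) z ∧ ∀ e ∈ I.hi, LeOrLt e.closed z (e.eval w)}

def ends (I : AffineInterval) : Set AffineEnd := {e | e = I.lo ∨ e ∈ I.hi}

def delay (ρ w : ℝ) (I : AffineInterval) : AffineInterval :=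
  ⟨I.lo.delay ρ w, I.hi.map (AffineEnd.delay ρ w)⟩

lemma mem_eval_delay {I : AffineInterval} {ρ w t z : ℝ} :
    z ∈ (I.delay ρ w).eval t ↔ z - ρ * (t - w) ∈ I.eval t := by
  have hdelay : ∀ e : AffineEnd, (e.delay ρ w).eval t = e.eval t + ρ * (t - w) := fun e => by
    rw [AffineEnd.delay_eval, AffineEnd.eval]
    ring
  simp only [eval, delay, mem_ofPred_eq, Option.forall_mem_map, hdelay, leOrLt_add_iff_le_sub,
    leOrLt_sub_iff_le_add]
  rfl

lemma ordConnected_eval (I : AffineInterval) (w : ℝ) : (I.eval w).OrdConnected :=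
  ⟨fun _ hx _ hy _ hz => ⟨hx.1.trans_le hz.1, fun e he => hz.2.trans_leOrLt (hy.2 e he)⟩⟩

section Window

variable {W : AffineInterval} {w : ℝ}

lemma isInfOn_eval (hW : (W.eval w).Nonempty) :
    IsInfOn id (W.eval w) (W.lo.eval w) W.lo.closed := by
  obtain ⟨t₀, ht₀⟩ := hW
  refine ⟨fun t ht => ht.1, fun hb => ⟨W.lo.eval w, ⟨?_, fun e he => ?_⟩, rfl⟩,
    fun ε hε => ?_⟩
  · rw [hb]
    exact leOrLt_refl _
  · exact ht₀.1.le.trans_leOrLt (ht₀.2 e he)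
  · by_cases h : t₀ < W.lo.eval w + ε
    · exact ⟨t₀, ht₀, h⟩
    · refine ⟨W.lo.eval w + ε / 2, ⟨leOrLt_of_lt (by linarith), fun e he => ?_⟩,
        by dsimp only [id]; linarith⟩
      exact (by linarith : W.lo.eval w + ε / 2 ≤ t₀).trans_leOrLt (ht₀.2 e he)

lemma isSupOn_eval (hW : (W.eval w).Nonempty) {E : AffineEnd} (hE : W.hi = some E) :
    IsSupOn id (W.eval w) (E.eval w) E.closed := by
  obtain ⟨t₀, ht₀⟩ := hW
  have hE' : E ∈ W.hi := hE
  have hmem : ∀ {t}, LeOrLt W.lo.closed (W.lo.eval w) t → LeOrLt E.closed t (E.eval w) →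
      t ∈ W.eval w := fun h₁ h₂ => ⟨h₁, by simpa [hE] using h₂⟩
  refine ⟨fun t ht => ht.2 E hE', fun hb => ⟨E.eval w, hmem ?_ ?_, rfl⟩, fun ε hε => ?_⟩
  · exact ht₀.1.trans_le (ht₀.2 E hE').le
  · rw [hb]
    exact leOrLt_refl _
  · by_cases h : E.eval w - ε < t₀
    · exact ⟨t₀, ht₀, h⟩
    · exact ⟨E.eval w - ε / 2, hmem (ht₀.1.trans_le (by linarith)) (leOrLt_of_lt (by linarith)),
        by dsimp only [id]; linarith⟩

lemma exists_gt_of_hi_eq_none (hW : (W.eval w).Nonempty) (hE : W.hi = none) (M : ℝ) :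
    ∃ t ∈ W.eval w, M < t := by
  obtain ⟨t₀, ht₀⟩ := hW
  exact ⟨max t₀ M + 1, ⟨ht₀.1.trans_le (by linarith [le_max_left t₀ M]), by simp [hE]⟩,
    by linarith [le_max_right t₀ M]⟩

end Window

lemma convex_graph (J : AffineInterval) {T : Set ℝ} (hT : Convex ℝ T) :
    Convex ℝ {p : ℝ × ℝ | p.1 ∈ T ∧ p.2 ∈ J.eval p.1} := by
  rintro ⟨t₁, y₁⟩ ⟨ht₁, hy₁⟩ ⟨t₂, y₂⟩ ⟨ht₂, hy₂⟩ θ₁ θ₂ hθ₁ hθ₂ hθ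
  simp only [Prod.smul_mk, Prod.mk_add_mk, smul_eq_mul, mem_ofPred_eq] at *
  refine ⟨hT ht₁ ht₂ hθ₁ hθ₂ hθ, ?_, fun e he => ?_⟩
  · rw [AffineEnd.eval_convexComb _ hθ]
    exact hy₁.1.convexComb hy₂.1 hθ₁ hθ₂ hθ
  · rw [AffineEnd.eval_convexComb _ hθ]
    exact (hy₁.2 e he).convexComb (hy₂.2 e he) hθ₁ hθ₂ hθ

lemma ordConnected_setOf_exists_mem_eval (J : AffineInterval) {T : Set ℝ} (hT : T.OrdConnected) :
    {z | ∃ t ∈ T, z ∈ J.eval t}.OrdConnected := by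
  have hU : {z | ∃ t ∈ T, z ∈ J.eval t} =
      LinearMap.snd ℝ ℝ ℝ '' {p | p.1 ∈ T ∧ p.2 ∈ J.eval p.1} := by
    ext z
    simp
  rw [hU]
  exact ((J.convex_graph hT.convex).linear_image _).ordConnected

lemma setOf_exists_mem_eval (J : AffineInterval) {T : Set ℝ} (hT : T.OrdConnected)
    (hne : ∀ t ∈ T, (J.eval t).Nonempty) :
    {z | ∃ t ∈ T, z ∈ J.eval t} =
      {z | ∃ t ∈ T, LeOrLt J.lo.closed (J.lo.eval t) z} ∩
        {z | ∀ e ∈ J.hi, ∃ t ∈ T, LeOrLt e.closed z (e.eval t)} := by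
  ext z
  refine ⟨fun ⟨t, ht, hz⟩ => ⟨⟨t, ht, hz.1⟩, fun e he => ⟨t, ht, hz.2 e he⟩⟩, ?_⟩
  rintro ⟨⟨t₁, ht₁, hz₁⟩, hz₂⟩
  cases hhi : J.hi with
  | none => exact ⟨t₁, ht₁, hz₁, by simp [hhi]⟩
  | some e =>
    have he : e ∈ J.hi := hhi
    obtain ⟨t₂, ht₂, hzt₂⟩ := hz₂ e he
    have hmem : ∀ {t}, LeOrLt J.lo.closed (J.lo.eval t) z → LeOrLt e.closed z (e.eval t) →
        z ∈ J.eval t := fun h₁ h₂ => ⟨h₁, by simpa [hhi] using h₂⟩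
    obtain ⟨y₁, hy₁, hy₁z⟩ : ∃ y ∈ {z | ∃ t ∈ T, z ∈ J.eval t}, y ≤ z := by
      by_cases h : LeOrLt e.closed z (e.eval t₁)
      · exact ⟨z, ⟨t₁, ht₁, hmem hz₁ h⟩, le_rfl⟩
      · obtain ⟨y, hy⟩ := hne t₁ ht₁
        exact ⟨y, ⟨t₁, ht₁, hy⟩, (hy.2 e he).le_of_not_leOrLt h⟩
    obtain ⟨y₂, hy₂, hzy₂⟩ : ∃ y ∈ {z | ∃ t ∈ T, z ∈ J.eval t}, z ≤ y := by
      by_cases h : LeOrLt J.lo.closed (J.lo.eval t₂) z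
      · exact ⟨z, ⟨t₂, ht₂, hmem h hzt₂⟩, le_rfl⟩
      · obtain ⟨y, hy⟩ := hne t₂ ht₂
        exact ⟨y, ⟨t₂, ht₂, hy⟩, hy.1.le_of_not_leOrLt' h⟩
    exact (J.ordConnected_setOf_exists_mem_eval hT).out hy₁ hy₂ ⟨hy₁z, hzy₂⟩

lemma exists_lower (ρ : ℝ) (W : AffineInterval) (e : AffineEnd) (hbdd : W.hi = none → e.β ≤ ρ) :
    ∃ L : AffineEnd, (∃ E ∈ W.ends, ∃ b, L = e.shift ρ E b) ∧ ∀ w, (W.eval w).Nonempty →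
      {z | ∃ t ∈ W.eval w, LeOrLt e.closed ((e.delay ρ w).eval t) z} =
        {z | LeOrLt L.closed (L.eval w) z} := by
  -- In `t`, the delayed bound has slope `ρ - e.β`: its infimum over the window is at the upper
  -- end, everywhere, or at the lower end.
  have hf := e.delay_eval ρ
  rcases lt_trichotomy (ρ - e.β) 0 with hk | hk | hk
  · obtain ⟨E, hE⟩ := Option.ne_none_iff_exists'.1 fun h => by linarith [hbdd h]
    refine ⟨e.shift ρ E (E.closed && e.closed), ⟨E, Or.inr hE, _, rfl⟩, fun w hW => ?_⟩
    rw [((isSupOn_eval hW hE).affine_of_neg (hf w) hk).setOf_exists_leOrLt, AffineEnd.shift_eval,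
      AffineEnd.shift_closed]
  · refine ⟨e.shift ρ W.lo e.closed, ⟨W.lo, Or.inl rfl, _, rfl⟩, fun w hW => ?_⟩
    rw [(isInfOn_of_const hW (hf w) hk _).setOf_exists_leOrLt, AffineEnd.shift_eval,
      AffineEnd.shift_closed, Bool.true_and]
  · refine ⟨e.shift ρ W.lo (W.lo.closed && e.closed), ⟨W.lo, Or.inl rfl, _, rfl⟩,
      fun w hW => ?_⟩
    rw [((isInfOn_eval hW).affine_of_pos (hf w) hk).setOf_exists_leOrLt, AffineEnd.shift_eval,
      AffineEnd.shift_closed]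

lemma exists_upper_of_some (ρ : ℝ) (W : AffineInterval) (e : AffineEnd) :
    ∃ H : Option AffineEnd, (∀ h ∈ H, ∃ E ∈ W.ends, ∃ b, h = e.shift ρ E b) ∧
      ∀ w, (W.eval w).Nonempty →
        {z | ∃ t ∈ W.eval w, LeOrLt e.closed z ((e.delay ρ w).eval t)} =
          {z | ∀ h ∈ H, LeOrLt h.closed z (h.eval w)} := by
  have hf := e.delay_eval ρ
  have hsome : ∀ E ∈ W.ends, ∀ b, ∀ h ∈ some (e.shift ρ E b),
      ∃ E ∈ W.ends, ∃ b, h = e.shift ρ E b := fun E hE b h hh => ⟨E, hE, b, (Option.mem_some_iff.1 hh).symm⟩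
  rcases lt_trichotomy (ρ - e.β) 0 with hk | hk | hk
  · refine ⟨some (e.shift ρ W.lo (e.closed && W.lo.closed)), hsome _ (Or.inl rfl) _,
      fun w hW => ?_⟩
    rw [((isInfOn_eval hW).affine_of_neg (hf w) hk).setOf_exists_leOrLt]
    simp [AffineEnd.shift_eval]
  · refine ⟨some (e.shift ρ W.lo e.closed), hsome _ (Or.inl rfl) _, fun w hW => ?_⟩
    rw [(isSupOn_of_const hW (hf w) hk (W.lo.eval w)).setOf_exists_leOrLt]
    simp [AffineEnd.shift_eval]
  · cases hE : W.hi with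
    | none =>
      refine ⟨none, by simp, fun w hW => ?_⟩
      rw [setOf_exists_leOrLt_eq_univ
        (exists_lt_of_affine_of_pos (exists_gt_of_hi_eq_none hW hE) (hf w) hk)]
      simp
    | some E =>
      refine ⟨some (e.shift ρ E (e.closed && E.closed)), hsome _ (Or.inr hE) _, fun w hW => ?_⟩
      rw [((isSupOn_eval hW hE).affine_of_pos (hf w) hk).setOf_exists_leOrLt]
      simp [AffineEnd.shift_eval]

lemma exists_upper (ρ : ℝ) (W : AffineInterval) (hi : Option AffineEnd) :
    ∃ H : Option AffineEnd, (∀ h ∈ H, ∃ e ∈ hi, ∃ E ∈ W.ends, ∃ b, h = e.shift ρ E b) ∧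
      ∀ w, (W.eval w).Nonempty →
        {z | ∀ e ∈ hi, ∃ t ∈ W.eval w, LeOrLt e.closed z ((e.delay ρ w).eval t)} =
          {z | ∀ h ∈ H, LeOrLt h.closed z (h.eval w)} := by
  rcases hi with _ | e
  · exact ⟨none, by simp, fun _ _ => by simp⟩
  · obtain ⟨H, hH, hHeq⟩ := exists_upper_of_some ρ W e
    exact ⟨H, fun h hh => ⟨e, rfl, hH h hh⟩, fun w hW => by simpa using hHeq w hW⟩

theorem exists_delay (ρ : ℝ) (W I : AffineInterval) (hbdd : W.hi = none → I.lo.β ≤ ρ) :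
    ∃ J : AffineInterval, (∀ e' ∈ J.ends, ∃ e ∈ I.ends, ∃ E ∈ W.ends, ∃ b, e' = e.shift ρ E b) ∧
      ∀ w, (W.eval w).Nonempty → (∀ t ∈ W.eval w, (I.eval t).Nonempty) →
        J.eval w = {z | ∃ t ∈ W.eval w, z - ρ * (t - w) ∈ I.eval t} := by
  obtain ⟨L, hL, hLeq⟩ := exists_lower ρ W I.lo hbdd
  obtain ⟨H, hH, hHeq⟩ := exists_upper ρ W I.hi
  refine ⟨⟨L, H⟩, ?_, fun w hW hI => ?_⟩
  · rintro e' (rfl | he')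
    · exact ⟨I.lo, Or.inl rfl, hL⟩
    · obtain ⟨e, he, hE⟩ := hH e' he'
      exact ⟨e, Or.inr he, hE⟩
  · have hI' : ∀ t ∈ W.eval w, ((I.delay ρ w).eval t).Nonempty := fun t ht =>
      let ⟨y, hy⟩ := hI t ht
      ⟨y + ρ * (t - w), mem_eval_delay.2 (by simpa using hy)⟩
    simp_rw [← mem_eval_delay]
    rw [(I.delay ρ w).setOf_exists_mem_eval (W.ordConnected_eval w) hI']
    simp only [delay, Option.forall_mem_map, AffineEnd.delay_closed]
    rw [hLeq w hW, hHeq w hW]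
    rfl

end AffineInterval

/-! ### Grid intercepts and rate slopes -/

def OnGrid (g : ℕ) (x : ℝ) : Prop := ∃ z : ℤ, x = z / g

def IsRateOrZero (A : PTA Q) (x : ℝ) : Prop := x = 0 ∨ ∃ l : Q, x = A.rate l

lemma OnGrid.zero (g : ℕ) : OnGrid g 0 := ⟨0, by simp⟩

lemma OnGrid.add_int_mul {g : ℕ} {x y : ℝ} (hx : OnGrid g x) (m : ℤ) (hy : OnGrid g y) :
    OnGrid g (x + m * y) := by
  obtain ⟨z₁, rfl⟩ := hx
  obtain ⟨z₂, rfl⟩ := hy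
  exact ⟨z₁ + m * z₂, by push_cast; ring⟩

lemma IsRateOrZero.exists_nat {A : PTA Q} {x : ℝ} (h : IsRateOrZero A x) : ∃ k : ℕ, x = k := by
  rcases h with rfl | ⟨l, rfl⟩
  exacts [⟨0, by simp⟩, ⟨A.rate l, rfl⟩]

def AffineEnd.IsNice (A : PTA Q) (g : ℕ) (e : AffineEnd) : Prop :=
  OnGrid g e.α ∧ IsRateOrZero A e.β

def AffineInterval.IsNice (A : PTA Q) (g : ℕ) (I : AffineInterval) : Prop :=
  ∀ e ∈ I.ends, e.IsNice A g

def AffineInterval.IsFlat (I : AffineInterval) : Prop := ∀ e ∈ I.ends, e.β = 0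

/-- The ends of delay windows have slope `0` (a constant `a i`) or `-1` (the clock value itself),
so that the shifted slope is `ρ` or the old one. -/
lemma AffineEnd.IsNice.shift {A : PTA Q} {g : ℕ} {e E : AffineEnd} {ρ : ℝ} (he : e.IsNice A g)
    (hρ : IsRateOrZero A ρ) (hE : OnGrid g E.α) (hEβ : E.β = 0 ∨ E.β = -1) (b : Bool) :
    (e.shift ρ E b).IsNice A g := by
  obtain ⟨k₁, hk₁⟩ := hρ.exists_nat
  obtain ⟨k₂, hk₂⟩ := he.2.exists_nat
  refine ⟨?_, ?_⟩
  · simpa [AffineEnd.shift, hk₁, hk₂] using he.1.add_int_mul ((k₁ : ℤ) - k₂) hE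
  · rcases hEβ with hEβ | hEβ <;> simp only [AffineEnd.shift, hEβ]
    · simpa using hρ
    · simpa using he.2

namespace AffineInterval

def zero : AffineInterval := ⟨⟨true, 0, 0⟩, some ⟨true, 0, 0⟩⟩

def empty : AffineInterval := ⟨⟨false, 0, 0⟩, some ⟨false, 0, 0⟩⟩

@[simp] lemma eval_zero (w : ℝ) : zero.eval w = {0} := by
  ext z
  simp [zero, eval, AffineEnd.eval, le_antisymm_iff, and_comm]

@[simp] lemma eval_empty (w : ℝ) : empty.eval w = ∅ := by
  ext z
  simp only [empty, eval, AffineEnd.eval, mem_ofPred_eq, mem_empty_iff_false, iff_false]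
  rintro ⟨h₁, h₂⟩
  exact (h₂ _ rfl).asymm (by simpa using h₁)

lemma isNice_zero (A : PTA Q) (g : ℕ) : zero.IsNice A g := by
  simp [IsNice, ends, zero, AffineEnd.IsNice, OnGrid.zero, IsRateOrZero]

lemma isFlat_zero : zero.IsFlat := by
  simp [IsFlat, ends, zero]

lemma isNice_empty (A : PTA Q) (g : ℕ) : empty.IsNice A g := by
  simp [IsNice, ends, empty, AffineEnd.IsNice, OnGrid.zero, IsRateOrZero]

lemma isFlat_empty : empty.IsFlat := by
  simp [IsFlat, ends, empty]

lemma countable_setOf_isNice (A : PTA Q) (g : ℕ) :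
    {I : AffineInterval | I.IsNice A g}.Countable := by
  let enc : Bool × ℤ × ℕ → AffineEnd := fun p => ⟨p.1, p.2.1 / g, p.2.2⟩
  have henc : ∀ e : AffineEnd, e.IsNice A g → ∃ p, enc p = e := by
    rintro ⟨b, α, β⟩ ⟨⟨z, hz⟩, hβ⟩
    obtain ⟨k, hk⟩ := hβ.exists_nat
    exact ⟨(b, z, k), by simp_all [enc]⟩
  refine (countable_range fun p : (Bool × ℤ × ℕ) × Option (Bool × ℤ × ℕ) =>
    (⟨enc p.1, p.2.map enc⟩ : AffineInterval)).mono ?_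
  rintro ⟨lo, hi⟩ hI
  obtain ⟨p, rfl⟩ := henc lo (hI lo (Or.inl rfl))
  cases hi with
  | none => exact ⟨(p, none), rfl⟩
  | some e =>
    obtain ⟨p', rfl⟩ := henc e (hI e (Or.inr rfl))
    exact ⟨(p, some p'), rfl⟩

def shape (I : AffineInterval) : IShape :=
  match I.lo.closed, I.hi with
  | true, none => .ci
  | false, none => .oi
  | true, some e => if e.closed then .cc else .co
  | false, some e => if e.closed then .oc else .oo

def hiα (I : AffineInterval) : ℝ := (I.hi.map AffineEnd.α).getD 0

def hiβ (I : AffineInterval) : ℝ := (I.hi.map AffineEnd.β).getD 0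

lemma mkInterval_shape (I : AffineInterval) (x : ℝ) :
    mkInterval I.shape (I.lo.α - I.lo.β * x) (I.hiα - I.hiβ * x) = I.eval x := by
  rcases I with ⟨⟨b, α, β⟩, _ | ⟨b', α', β'⟩⟩ <;> cases b <;> (try cases b') <;> ext z <;>
    simp [shape, hiα, hiβ, mkInterval, eval, AffineEnd.eval]

lemma IsNice.shape_or_onGrid {A : PTA Q} {g : ℕ} {I : AffineInterval} (h : I.IsNice A g) :
    I.shape = .ci ∨ I.shape = .oi ∨ OnGrid g I.hiα := by
  rcases I with ⟨⟨b, α, β⟩, _ | e⟩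
  · cases b <;> simp [shape]
  · exact Or.inr (Or.inr (h e (Or.inr rfl)).1)

lemma IsNice.isRateOrZero_hiβ {A : PTA Q} {g : ℕ} {I : AffineInterval} (h : I.IsNice A g) :
    IsRateOrZero A I.hiβ := by
  rcases I with ⟨lo, _ | e⟩
  · exact Or.inl rfl
  · exact (h e (Or.inr rfl)).2

lemma IsFlat.hiβ_eq_zero {I : AffineInterval} (h : I.IsFlat) : I.hiβ = 0 := by
  rcases I with ⟨lo, _ | e⟩
  · rfl
  · exact h e (Or.inr rfl)

end AffineInterval

/-! ### Regions -/

inductive Region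
  | point (j : ℕ)
  | between (j : ℕ)
  | top
  deriving DecidableEq

namespace Region

variable {a : ℕ → ℝ} {n : ℕ}

def IsValid (n : ℕ) : Region → Prop
  | point j => j ≤ n
  | between j => j < n
  | top => True

def toSet (a : ℕ → ℝ) (n : ℕ) : Region → Set ℝ
  | point j => {a j}
  | between j => Ioo (a j) (a (j + 1))
  | top => Ioi (a n)

def toAffineInterval (a : ℕ → ℝ) (n : ℕ) : Region → AffineInterval
  | point j => ⟨⟨true, a j, 0⟩, some ⟨true, a j, 0⟩⟩
  | between j => ⟨⟨false, a j, 0⟩, some ⟨false, a (j + 1), 0⟩⟩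
  | top => ⟨⟨false, a n, 0⟩, none⟩

/-- For `w ∈ R`, the clock values in `R₂` that a delay from `w` can reach; the end
`⟨true, 0, -1⟩` evaluates to `w` itself. -/
def window (a : ℕ → ℝ) (n : ℕ) (R R₂ : Region) : AffineInterval :=
  if R = R₂ then ⟨⟨true, 0, -1⟩, (R₂.toAffineInterval a n).hi⟩ else R₂.toAffineInterval a n

lemma eval_toAffineInterval (R : Region) (w : ℝ) :
    (R.toAffineInterval a n).eval w = R.toSet a n := by
  cases R <;> ext z <;>
    simp [toAffineInterval, toSet, AffineInterval.eval, AffineEnd.eval, le_antisymm_iff, and_comm]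

lemma exists_eq_toSet {r : Set ℝ} (hr : r ∈ Regions a n) :
    ∃ R : Region, R.IsValid n ∧ r = R.toSet a n := by
  rcases hr with ⟨i, hi, rfl⟩ | ⟨i, hi, rfl⟩ | rfl
  exacts [⟨point i, hi, rfl⟩, ⟨between i, hi, rfl⟩, ⟨top, trivial, rfl⟩]

lemma ordConnected_toSet (R : Region) : (R.toSet a n).OrdConnected := by
  cases R <;> simp only [toSet] <;> infer_instance

lemma exists_mem (h0 : a 0 = 0) {u : ℝ} (hu : 0 ≤ u) :
    ∃ R : Region, R.IsValid n ∧ u ∈ R.toSet a n := by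
  classical
  set i := Nat.findGreatest (fun i => a i ≤ u) n
  have hin : i ≤ n := Nat.findGreatest_le n
  have hai : a i ≤ u := Nat.findGreatest_spec (P := fun i => a i ≤ u) (Nat.zero_le n) (by rwa [h0])
  rcases hai.eq_or_lt with heq | hlt
  · exact ⟨point i, hin, heq.symm⟩
  rcases hin.eq_or_lt with heq | hin
  · exact ⟨top, trivial, heq ▸ hlt⟩
  · exact ⟨between i, hin, hlt,
      lt_of_not_ge (Nat.findGreatest_is_greatest (Nat.lt_succ_self i) hin)⟩

lemma eq_of_mem (ha : StrictMonoOn a (Iic n)) {R R' : Region} (hR : R.IsValid n)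
    (hR' : R'.IsValid n) {u : ℝ} (hu : u ∈ R.toSet a n) (hu' : u ∈ R'.toSet a n) : R = R' := by
  have hlt : ∀ {i j}, i ≤ n → j ≤ n → a i < a j → i < j := fun hi hj h => (ha.lt_iff_lt hi hj).1 h
  rcases R with i | i | _ <;> rcases R' with j | j | _ <;>
    simp only [IsValid, toSet, mem_singleton_iff, mem_Ioo, mem_Ioi] at hR hR' hu hu'
  · rw [ha.injOn hR hR' (hu.symm.trans hu')]
  · have := hlt (by omega) hR (hu ▸ hu'.1)
    have := hlt hR (by omega) (hu ▸ hu'.2)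
    omega
  · exact absurd (hlt le_rfl hR (hu ▸ hu')) (by omega)
  · have := hlt (by omega) hR' (hu' ▸ hu.1)
    have := hlt hR' (by omega) (hu' ▸ hu.2)
    omega
  · have := hlt (by omega) (by omega) (hu.1.trans hu'.2)
    have := hlt (by omega) (by omega) (hu'.1.trans hu.2)
    rw [show i = j by omega]
  · exact absurd (hlt le_rfl (by omega) (hu'.trans hu.2)) (by omega)
  · exact absurd (hlt le_rfl hR' (hu' ▸ hu)) (by omega)
  · exact absurd (hlt le_rfl (by omega) (hu.trans hu'.2)) (by omega)
  · rfl

lemma nonneg (ha : StrictMonoOn a (Iic n)) (h0 : a 0 = 0) {R : Region} (hR : R.IsValid n)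
    {u : ℝ} (hu : u ∈ R.toSet a n) : 0 ≤ u := by
  have hpos : ∀ i ≤ n, 0 ≤ a i := fun i hi =>
    h0 ▸ ha.monotoneOn (Nat.zero_le n) hi (Nat.zero_le i)
  rcases R with j | j | _
  · exact (hu : u = a j) ▸ hpos j hR
  · exact (hpos j hR.le).trans hu.1.le
  · exact (hpos n le_rfl).trans (le_of_lt hu)

lemma nonempty (ha : StrictMonoOn a (Iic n)) {R : Region} (hR : R.IsValid n) :
    (R.toSet a n).Nonempty := by
  rcases R with j | j | _
  · exact ⟨a j, rfl⟩
  · have : a j < a (j + 1) := ha (Nat.le_of_lt hR) hR (Nat.lt_succ_self j)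
    exact ⟨(a j + a (j + 1)) / 2, by constructor <;> linarith⟩
  · exact ⟨a n + 1, by simp [toSet]⟩

lemma eq_top_of_toSet_eq (ha : StrictMonoOn a (Iic n)) {R : Region} (hR : R.IsValid n)
    (h : R.toSet a n = Ioi (a n)) : R = top :=
  eq_of_mem ha hR trivial (u := a n + 1) (by simp [h]) (by simp [toSet])

lemma eq_top_of_top_le (ha : StrictMonoOn a (Iic n)) {R₂ : Region} (hR₂ : R₂.IsValid n)
    {x x' : ℝ} (hx : x ∈ top.toSet a n) (hx' : x' ∈ R₂.toSet a n) (hxx' : x ≤ x') : R₂ = top :=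
  eq_of_mem ha hR₂ trivial hx' (lt_of_lt_of_le (hx : a n < x) hxx')

/-- Regions are convex and disjoint, hence ordered. -/
lemma lt_of_mem_of_ne (ha : StrictMonoOn a (Iic n)) {R R₂ : Region} (hR : R.IsValid n)
    (hR₂ : R₂.IsValid n) (hne : R ≠ R₂) {x x' w t : ℝ} (hx : x ∈ R.toSet a n)
    (hx' : x' ∈ R₂.toSet a n) (hxx' : x ≤ x') (hw : w ∈ R.toSet a n) (ht : t ∈ R₂.toSet a n) :
    w < t := by
  by_contra! htw
  rcases le_total x t with hxt | htx
  · exact hne (eq_of_mem ha hR hR₂ (R.ordConnected_toSet.out hx hw ⟨hxt, htw⟩) ht)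
  · exact hne (eq_of_mem ha hR hR₂ hx (R₂.ordConnected_toSet.out ht hx' ⟨htx, hxx'⟩))

lemma exists_mem_toSet_ge (ha : StrictMonoOn a (Iic n)) {R R₂ : Region} (hR : R.IsValid n)
    (hR₂ : R₂.IsValid n) {x x' w : ℝ} (hx : x ∈ R.toSet a n) (hx' : x' ∈ R₂.toSet a n)
    (hxx' : x ≤ x') (hw : w ∈ R.toSet a n) : ∃ t ∈ R₂.toSet a n, w ≤ t := by
  by_cases h : R = R₂
  · exact ⟨w, h ▸ hw, le_rfl⟩
  · obtain ⟨t, ht⟩ := nonempty ha hR₂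
    exact ⟨t, ht, (lt_of_mem_of_ne ha hR hR₂ h hx hx' hxx' hw ht).le⟩

lemma eval_window (ha : StrictMonoOn a (Iic n)) {R R₂ : Region} (hR : R.IsValid n)
    (hR₂ : R₂.IsValid n) {x x' w : ℝ} (hx : x ∈ R.toSet a n) (hx' : x' ∈ R₂.toSet a n)
    (hxx' : x ≤ x') (hw : w ∈ R.toSet a n) :
    (window a n R R₂).eval w = R₂.toSet a n ∩ Ici w := by
  unfold window
  split_ifs with h
  · subst h
    ext t
    rcases R with j | j | _ <;>
      simp [toAffineInterval, toSet, AffineInterval.eval, AffineEnd.eval] at hw ⊢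
    · subst hw
      exact ⟨fun h => ⟨le_antisymm h.2 h.1, h.1⟩, fun h => ⟨h.2, h.1.le⟩⟩
    · exact ⟨fun h => ⟨⟨hw.1.trans_le h.1, h.2⟩, h.1⟩, fun h => ⟨h.2, h.1.2⟩⟩
    · exact hw.trans_le
  · rw [eval_toAffineInterval]
    exact (inter_eq_left.2 fun t ht => (lt_of_mem_of_ne ha hR hR₂ h hx hx' hxx' hw ht).le).symm

lemma ends_toAffineInterval {g : ℕ} (hgrid : ∀ i ≤ n, OnGrid g (a i)) {R : Region}
    (hR : R.IsValid n) : ∀ E ∈ (R.toAffineInterval a n).ends, OnGrid g E.α ∧ E.β = 0 := by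
  intro E hE
  rcases R with j | j | _ <;> simp only [IsValid] at hR <;>
    simp [toAffineInterval, AffineInterval.ends] at hE <;> rcases hE with rfl | rfl <;>
    exact ⟨hgrid _ (by omega), rfl⟩

lemma ends_window {g : ℕ} (hgrid : ∀ i ≤ n, OnGrid g (a i)) {R R₂ : Region}
    (hR₂ : R₂.IsValid n) : ∀ E ∈ (window a n R R₂).ends, OnGrid g E.α ∧ (E.β = 0 ∨ E.β = -1) := by
  have h := ends_toAffineInterval hgrid hR₂
  unfold window
  split_ifs
  · rintro E (rfl | hE)
    · exact ⟨OnGrid.zero g, Or.inr rfl⟩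
    · exact (h E (Or.inr hE)).imp_right Or.inl
  · exact fun E hE => (h E hE).imp_right Or.inl

lemma eq_top_of_window_hi_eq_none {R R₂ : Region} (h : (window a n R R₂).hi = none) :
    R₂ = top := by
  unfold window at h
  split_ifs at h <;> cases R₂ <;> simp_all [toAffineInterval]

lemma window_top_top : window a n top top = ⟨⟨true, 0, -1⟩, none⟩ := by
  simp [window, toAffineInterval]

lemma lt_iff_lt_of_mem (ha : StrictMonoOn a (Iic n)) {R : Region} (hR : R.IsValid n) {u u' : ℝ}
    (hu : u ∈ R.toSet a n) (hu' : u' ∈ R.toSet a n) {i : ℕ} (hi : i ≤ n) :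
    (u < a i ↔ u' < a i) ∧ (a i < u ↔ a i < u') := by
  rcases R with j | j | _
  · rw [(hu : u = a j), (hu' : u' = a j)]
    exact ⟨Iff.rfl, Iff.rfl⟩
  · obtain ⟨hu₁, hu₂⟩ := hu
    obtain ⟨hu₁', hu₂'⟩ := hu'
    rcases le_or_gt i j with hij | hij
    · have := ha.monotoneOn hi (Nat.le_of_lt hR) hij
      constructor <;> constructor <;> intro <;> linarith
    · have := ha.monotoneOn hR hi hij
      constructor <;> constructor <;> intro <;> linarith
  · have := ha.monotoneOn hi (le_refl n) hi
    have hu₁ : a n < u := hu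
    have hu₁' : a n < u' := hu'
    constructor <;> constructor <;> intro <;> linarith

end Region

lemma Cmp.sat_iff_of_iff {op : Cmp} {u u' c : ℝ} (h₁ : u < c ↔ u' < c) (h₂ : c < u ↔ c < u') :
    Cmp.sat op u c ↔ Cmp.sat op u' c := by
  cases op <;> simp only [Cmp.sat, ← not_lt, le_antisymm_iff, h₁, h₂]

lemma PGuard.ordConnected_setOf_sat (gd : PGuard) : {x | gd.sat x}.OrdConnected :=
  ⟨fun x hx y hy z hz p hp => by
    have h₁ := hx p hp
    have h₂ := hy p hp
    rcases p with ⟨_ | _ | _ | _ | _, c⟩ <;> simp only [Cmp.sat] at * <;> linarith [hz.1, hz.2]⟩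

lemma PGuard.sat_iff_of_mem {a : ℕ → ℝ} {n : ℕ} (ha : StrictMonoOn a (Iic n)) {gd : PGuard}
    (hgd : ∀ p ∈ gd, ∃ i ≤ n, a i = p.2) {R : Region} (hR : R.IsValid n) {u u' : ℝ}
    (hu : u ∈ R.toSet a n) (hu' : u' ∈ R.toSet a n) : gd.sat u ↔ gd.sat u' := by
  refine forall₂_congr fun p hp => ?_
  obtain ⟨i, hi, hai⟩ := hgd p hp
  rw [← hai]
  exact Cmp.sat_iff_of_iff (Region.lt_iff_lt_of_mem ha hR hu hu' hi).1
    (Region.lt_iff_lt_of_mem ha hR hu hu' hi).2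

lemma PTA.consts_of_inv (A : PTA Q) {a : ℕ → ℝ} {n : ℕ}
    (hconsts : ∀ c ∈ A.consts, ∃ i ≤ n, a i = (c : ℝ)) (q : Q) :
    ∀ p ∈ A.Inv q, ∃ i ≤ n, a i = p.2 :=
  fun p hp => hconsts p.2 (Or.inr ⟨q, p, hp, rfl⟩)

lemma PTA.consts_of_guard (A : PTA Q) {a : ℕ → ℝ} {n : ℕ}
    (hconsts : ∀ c ∈ A.consts, ∃ i ≤ n, a i = (c : ℝ)) {e : PTrans Q} (he : e ∈ A.E) :
    ∀ p ∈ e.guard, ∃ i ≤ n, a i = p.2 :=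
  fun p hp => hconsts p.2 (Or.inl ⟨e, he, p, hp, rfl⟩)

/-! ### Cost families along paths -/

lemma PPath.step_eq {A : PTA Q} {s s' s'' : Q × ℝ} {c c' d : ℝ} (hm : PMove A s c s')
    (hp : PPath A s' c' s'') (h : c + c' = d) : PPath A s d s'' :=
  h ▸ PPath.step hm hp

/-- The invariant is a convex set that does not distinguish the clock values of a region. -/
lemma DelayMove.of_mem_toSet {A : PTA Q} {a : ℕ → ℝ} {n : ℕ} (ha : StrictMonoOn a (Iic n))
    {s s' : Q × ℝ} (hinv : ∀ p ∈ A.Inv s.1, ∃ i ≤ n, a i = p.2) {R R₂ : Region}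
    (hR : R.IsValid n) (hR₂ : R₂.IsValid n) {c : ℝ} (hmove : DelayMove A s c s')
    (hx : s.2 ∈ R.toSet a n) (hx' : s'.2 ∈ R₂.toSet a n) {w t : ℝ} (hw : w ∈ R.toSet a n)
    (ht : t ∈ R₂.toSet a n) (hwt : w ≤ t) :
    DelayMove A (s.1, w) ((t - w) * A.rate s.1) (s.1, t) := by
  obtain ⟨t₀, ht₀, rfl, -, hsat⟩ := hmove
  have hw' := (PGuard.sat_iff_of_mem ha hinv hR hx hw).1 (by simpa using hsat 0 le_rfl ht₀)
  have ht' := (PGuard.sat_iff_of_mem ha hinv hR₂ hx' ht).1 (hsat t₀ ht₀ le_rfl)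
  exact ⟨t - w, sub_nonneg.2 hwt, by simp, rfl, fun t' h₁ h₂ =>
    (PGuard.ordConnected_setOf_sat _).out hw' ht' ⟨by simpa using h₁, by simp; linarith⟩⟩

section CostFamily

variable (A : PTA Q) (g : ℕ) (a : ℕ → ℝ) (n : ℕ)

structure IsCostFamily (q : Q) (R : Region) (q' : Q) (R' : Region) (d : AffineInterval) :
    Prop where
  isNice : d.IsNice A g
  isFlat : R = .top → d.IsFlat
  sound : ∀ w ∈ R.toSet a n, ∀ y ∈ d.eval w, ∃ β ∈ R'.toSet a n, PPath A (q, w) y (q', β)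

structure IsCostRepr (q : Q) (R : Region) (q' : Q) (R' : Region) (d : AffineInterval) : Prop
    extends IsCostFamily A g a n q R q' R' d where
  nonempty : ∀ w ∈ R.toSet a n, (d.eval w).Nonempty

variable {A g a n}

lemma IsCostRepr.refl {q : Q} {R : Region} : IsCostRepr A g a n q R q R .zero where
  isNice := AffineInterval.isNice_zero A g
  isFlat _ := AffineInterval.isFlat_zero
  sound w hw y hy := ⟨w, hw, by
    rw [AffineInterval.eval_zero, mem_singleton_iff] at hy
    exact hy ▸ PPath.refl _⟩
  nonempty _ _ := by simp

lemma IsCostRepr.discrete {q q₂ q' : Q} {R R' : Region} {d : AffineInterval}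
    (hmove : ∀ w ∈ R.toSet a n, DiscMove A (q, w) 0 (q₂, w))
    (hd : IsCostRepr A g a n q₂ R q' R' d) : IsCostRepr A g a n q R q' R' d where
  isNice := hd.isNice
  isFlat := hd.isFlat
  sound w hw y hy :=
    let ⟨β, hβ, hp⟩ := hd.sound w hw y hy
    ⟨β, hβ, PPath.step_eq (Or.inr (hmove w hw)) hp (zero_add y)⟩
  nonempty := hd.nonempty

/-- A reset is a delay at rate `0` into the window `{a 0}`. -/
lemma IsCostRepr.reset (hgrid : ∀ i ≤ n, OnGrid g (a i)) {q q₂ q' : Q} {R R' : Region}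
    {d₂ : AffineInterval} (hmove : ∀ w ∈ R.toSet a n, DiscMove A (q, w) 0 (q₂, a 0))
    (hd₂ : IsCostRepr A g a n q₂ (.point 0) q' R' d₂) :
    ∃ d, IsCostRepr A g a n q R q' R' d ∧ ∀ w, d.eval w = d₂.eval (a 0) := by
  set W := (Region.point 0).toAffineInterval a n
  have hWeval : ∀ w, W.eval w = {a 0} := fun w => Region.eval_toAffineInterval _ w
  obtain ⟨d, hends, heval⟩ := W.exists_delay 0 d₂ (by simp [W, Region.toAffineInterval])
  have hd : ∀ w, d.eval w = d₂.eval (a 0) := fun w => by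
    rw [heval w (by simp [hWeval]) (by simpa [hWeval] using hd₂.nonempty (a 0) rfl), hWeval]
    ext z
    simp
  have hWends := Region.ends_toAffineInterval hgrid (R := .point 0) (Nat.zero_le n)
  refine ⟨d, ⟨⟨fun e' he' => ?_, fun _ e' he' => ?_, fun w hw y hy => ?_⟩, fun w _ => ?_⟩, hd⟩
  · obtain ⟨e, he, E, hE, b, rfl⟩ := hends e' he'
    exact (hd₂.isNice e he).shift (Or.inl rfl) (hWends E hE).1 (Or.inl (hWends E hE).2) b
  · obtain ⟨e, he, E, hE, b, rfl⟩ := hends e' he'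
    simp [AffineEnd.shift, (hWends E hE).2]
  · obtain ⟨β, hβ, hp⟩ := hd₂.sound (a 0) rfl y (hd w ▸ hy)
    exact ⟨β, hβ, PPath.step_eq (Or.inr (hmove w hw)) hp (zero_add y)⟩
  · exact hd w ▸ hd₂.nonempty (a 0) rfl

lemma IsCostRepr.delay (ha : StrictMonoOn a (Iic n)) (hgrid : ∀ i ≤ n, OnGrid g (a i))
    {q q' : Q} {R R₂ R' : Region} (hR : R.IsValid n) (hR₂ : R₂.IsValid n) {x x' : ℝ}
    (hx : x ∈ R.toSet a n) (hx' : x' ∈ R₂.toSet a n) (hxx' : x ≤ x')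
    (hmove : ∀ w ∈ R.toSet a n, ∀ t ∈ R₂.toSet a n, w ≤ t →
      DelayMove A (q, w) ((t - w) * A.rate q) (q, t))
    {d₂ : AffineInterval} (hd₂ : IsCostRepr A g a n q R₂ q' R' d₂) :
    ∃ d, IsCostRepr A g a n q R q' R' d ∧ ∀ w ∈ R.toSet a n, ∀ t ∈ R₂.toSet a n, w ≤ t →
      ∀ y ∈ d₂.eval t, y + A.rate q * (t - w) ∈ d.eval w := by
  set W := Region.window a n R R₂
  have hWeval : ∀ w ∈ R.toSet a n, W.eval w = R₂.toSet a n ∩ Ici w := fun w hw =>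
    Region.eval_window ha hR hR₂ hx hx' hxx' hw
  have hbdd : W.hi = none → d₂.lo.β ≤ A.rate q := fun h => by
    rw [hd₂.isFlat (Region.eq_top_of_window_hi_eq_none h) _ (Or.inl rfl)]
    exact Nat.cast_nonneg _
  obtain ⟨d, hends, heval⟩ := W.exists_delay (A.rate q) d₂ hbdd
  have hd : ∀ w ∈ R.toSet a n,
      d.eval w = {z | ∃ t ∈ R₂.toSet a n ∩ Ici w, z - A.rate q * (t - w) ∈ d₂.eval t} := by
    intro w hw
    obtain ⟨t, ht, hwt⟩ := Region.exists_mem_toSet_ge ha hR hR₂ hx hx' hxx' hw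
    rw [heval w (by rw [hWeval w hw]; exact ⟨t, ht, hwt⟩)
      (fun t ht => hd₂.nonempty t (hWeval w hw ▸ ht).1), hWeval w hw]
  have hcompl : ∀ w ∈ R.toSet a n, ∀ t ∈ R₂.toSet a n, w ≤ t →
      ∀ y ∈ d₂.eval t, y + A.rate q * (t - w) ∈ d.eval w := fun w hw t ht hwt y hy => by
    rw [hd w hw]
    exact ⟨t, ⟨ht, hwt⟩, by simpa using hy⟩
  refine ⟨d, ⟨⟨fun e' he' => ?_, fun hRtop e' he' => ?_, fun w hw y hy => ?_⟩, fun w hw => ?_⟩,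
    hcompl⟩
  · obtain ⟨e, he, E, hE, b, rfl⟩ := hends e' he'
    exact (hd₂.isNice e he).shift (Or.inr ⟨q, rfl⟩) (Region.ends_window hgrid hR₂ E hE).1
      (Region.ends_window hgrid hR₂ E hE).2 b
  · obtain ⟨e, he, E, hE, b, rfl⟩ := hends e' he'
    subst hRtop
    obtain rfl := Region.eq_top_of_top_le ha hR₂ hx hx' hxx'
    rw [show W = ⟨⟨true, 0, -1⟩, none⟩ from Region.window_top_top] at hE
    obtain rfl : E = ⟨true, 0, -1⟩ := hE.resolve_right (by simp)
    simp [AffineEnd.shift, hd₂.isFlat rfl e he]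
  · rw [hd w hw] at hy
    obtain ⟨t, ⟨ht, hwt⟩, hy⟩ := hy
    obtain ⟨β, hβ, hp⟩ := hd₂.sound t ht _ hy
    exact ⟨β, hβ, PPath.step_eq (Or.inl (hmove w hw t ht hwt)) hp (by ring)⟩
  · obtain ⟨t, ht, hwt⟩ := Region.exists_mem_toSet_ge ha hR hR₂ hx hx' hxx' hw
    obtain ⟨y, hy⟩ := hd₂.nonempty t ht
    exact ⟨_, hcompl w hw t ht hwt y hy⟩

lemma IsCostRepr.of_delayMove (ha : StrictMonoOn a (Iic n)) (h0 : a 0 = 0)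
    (hconsts : ∀ c ∈ A.consts, ∃ i ≤ n, a i = (c : ℝ)) (hgrid : ∀ i ≤ n, OnGrid g (a i))
    {q' : Q} {R R' : Region} (hR : R.IsValid n) {s s' : Q × ℝ} {c c' : ℝ}
    (hmove : DelayMove A s c s') (hx : s.2 ∈ R.toSet a n)
    (ih : ∀ R₂ : Region, R₂.IsValid n → s'.2 ∈ R₂.toSet a n →
      ∃ d₂, IsCostRepr A g a n s'.1 R₂ q' R' d₂ ∧ c' ∈ d₂.eval s'.2) :
    ∃ d, IsCostRepr A g a n s.1 R q' R' d ∧ c + c' ∈ d.eval s.2 := by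
  obtain ⟨t₀, ht₀, rfl, rfl, -⟩ := id hmove
  obtain ⟨R₂, hR₂, hx'⟩ := Region.exists_mem h0 (add_nonneg (Region.nonneg ha h0 hR hx) ht₀)
  obtain ⟨d₂, hd₂, hc'⟩ := ih R₂ hR₂ hx'
  obtain ⟨d, hd, hcompl⟩ := hd₂.delay ha hgrid hR hR₂ hx hx' (le_add_of_nonneg_right ht₀)
    fun w hw t ht hwt => hmove.of_mem_toSet ha (A.consts_of_inv hconsts _) hR hR₂ hx hx' hw ht hwt
  refine ⟨d, hd, ?_⟩
  convert hcompl _ hx _ hx' (le_add_of_nonneg_right ht₀) _ hc' using 1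
  ring

lemma IsCostRepr.of_discMove (hdisc : ∀ e ∈ A.E, e.dcost = 0) (ha : StrictMonoOn a (Iic n))
    (h0 : a 0 = 0) (hconsts : ∀ c ∈ A.consts, ∃ i ≤ n, a i = (c : ℝ))
    (hgrid : ∀ i ≤ n, OnGrid g (a i)) {q' : Q} {R R' : Region} (hR : R.IsValid n)
    {s s' : Q × ℝ} {c c' : ℝ} (hmove : DiscMove A s c s') (hx : s.2 ∈ R.toSet a n)
    (ih : ∀ R₂ : Region, R₂.IsValid n → s'.2 ∈ R₂.toSet a n →
      ∃ d₂, IsCostRepr A g a n s'.1 R₂ q' R' d₂ ∧ c' ∈ d₂.eval s'.2) :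
    ∃ d, IsCostRepr A g a n s.1 R q' R' d ∧ c + c' ∈ d.eval s.2 := by
  obtain ⟨e, he, hsrc, htgt, hguard, hval, hinv, rfl⟩ := hmove
  have hguard' : ∀ w ∈ R.toSet a n, e.guard.sat w := fun w hw =>
    (PGuard.sat_iff_of_mem ha (A.consts_of_guard hconsts he) hR hx hw).1 hguard
  rw [hdisc e he, Nat.cast_zero, zero_add]
  cases hres : e.reset
  · have hx' : s'.2 = s.2 := by simpa [hres] using hval
    obtain ⟨d, hd, hc'⟩ := ih R hR (hx' ▸ hx)
    refine ⟨d, hd.discrete fun w hw => ⟨e, he, hsrc, htgt, hguard' w hw, by simp [hres], ?_,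
      by simp [hdisc e he]⟩, hx' ▸ hc'⟩
    exact (PGuard.sat_iff_of_mem ha (A.consts_of_inv hconsts _) hR (hx' ▸ hx) hw).1 hinv
  · have hx' : s'.2 = a 0 := by simpa [hres, h0] using hval
    obtain ⟨d₂, hd₂, hc'⟩ := ih (.point 0) (Nat.zero_le n) hx'
    obtain ⟨d, hd, heval⟩ := hd₂.reset hgrid fun w hw =>
      ⟨e, he, hsrc, htgt, hguard' w hw, by simp [hres, h0], hx' ▸ hinv, by simp [hdisc e he]⟩
    exact ⟨d, hd, by rw [heval]; exact hx' ▸ hc'⟩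

theorem exists_isCostRepr_of_pPath (hdisc : ∀ e ∈ A.E, e.dcost = 0)
    (ha : StrictMonoOn a (Iic n)) (h0 : a 0 = 0)
    (hconsts : ∀ c ∈ A.consts, ∃ i ≤ n, a i = (c : ℝ)) (hgrid : ∀ i ≤ n, OnGrid g (a i))
    {q' : Q} {R' : Region} (hR' : R'.IsValid n) {s s' : Q × ℝ} {c : ℝ} (hp : PPath A s c s')
    (hq' : s'.1 = q') (hβ : s'.2 ∈ R'.toSet a n) {R : Region} (hR : R.IsValid n)
    (hx : s.2 ∈ R.toSet a n) : ∃ d, IsCostRepr A g a n s.1 R q' R' d ∧ c ∈ d.eval s.2 := by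
  induction hp generalizing R with
  | refl s =>
    subst hq'
    obtain rfl := Region.eq_of_mem ha hR hR' hx hβ
    exact ⟨.zero, .refl, by simp⟩
  | step hm _ ih =>
    rcases hm with hm | hm
    · exact IsCostRepr.of_delayMove ha h0 hconsts hgrid hR hm hx
        fun _ hR₂ hx' => ih hq' hβ hR₂ hx'
    · exact IsCostRepr.of_discMove hdisc ha h0 hconsts hgrid hR hm hx
        fun _ hR₂ hx' => ih hq' hβ hR₂ hx'

end CostFamily

theorem stmt4_general {Q : Type} [Fintype Q] (A : PTA Q)
    (hdisc : ∀ e ∈ A.E, e.dcost = 0)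
    (g : ℕ)
    (n : ℕ) (a : ℕ → ℝ) (h0 : a 0 = 0)
    (hmono : ∀ i j : ℕ, i ≤ n → j ≤ n → i < j → a i < a j)
    (hconsts : ∀ c ∈ PTA.consts A, ∃ i ≤ n, a i = (c : ℝ))
    (hmult : ∀ i ≤ n, ∃ k : ℕ, a i = (k : ℝ) / (g : ℝ))
    (q q' : Q) (r r' : Set ℝ) (hr : r ∈ Regions a n) (hr' : r' ∈ Regions a n) :
    ∃ (sh : ℕ → IShape) (α α' βl βr : ℕ → ℝ),
      (∀ m : ℕ, ∃ z : ℤ, α m = (z : ℝ) / (g : ℝ)) ∧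
      (∀ m : ℕ, sh m = IShape.ci ∨ sh m = IShape.oi ∨ ∃ z : ℤ, α' m = (z : ℝ) / (g : ℝ)) ∧
      (∀ m : ℕ, βl m = 0 ∨ ∃ l : Q, βl m = (A.rate l : ℝ)) ∧
      (∀ m : ℕ, βr m = 0 ∨ ∃ l : Q, βr m = (A.rate l : ℝ)) ∧
      (r = Set.Ioi (a n) → ∀ m : ℕ, βl m = 0 ∧ βr m = 0) ∧
      (∀ x ∈ r, {c : ℝ | ∃ β ∈ r', PPath A (q, x) c (q', β)} =
        ⋃ m : ℕ, mkInterval (sh m) (α m - βl m * x) (α' m - βr m * x)) := by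
  have ha : StrictMonoOn a (Iic n) := fun i hi j hj hij => hmono i j hi hj hij
  have hgrid : ∀ i ≤ n, OnGrid g (a i) := fun i hi =>
    let ⟨k, hk⟩ := hmult i hi
    ⟨k, by simp [hk]⟩
  obtain ⟨R, hR, rfl⟩ := Region.exists_eq_toSet hr
  obtain ⟨R', hR', rfl⟩ := Region.exists_eq_toSet hr'
  obtain ⟨D, hD⟩ := ((AffineInterval.countable_setOf_isNice A g).mono
    fun d (hd : IsCostFamily A g a n q R q' R' d) => hd.isNice).exists_eq_range
    ⟨.empty, AffineInterval.isNice_empty A g, fun _ => AffineInterval.isFlat_empty, by simp⟩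
  have hDfam : ∀ m, IsCostFamily A g a n q R q' R' (D m) := fun m => hD ▸ mem_range_self m
  refine ⟨fun m => (D m).shape, fun m => (D m).lo.α, fun m => (D m).hiα, fun m => (D m).lo.β,
    fun m => (D m).hiβ, fun m => ((hDfam m).isNice _ (Or.inl rfl)).1,
    fun m => (hDfam m).isNice.shape_or_onGrid, fun m => ((hDfam m).isNice _ (Or.inl rfl)).2,
    fun m => (hDfam m).isNice.isRateOrZero_hiβ, fun htop m => ?_, fun x hx => ?_⟩
  · have hflat := (hDfam m).isFlat (Region.eq_top_of_toSet_eq ha hR htop)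
    exact ⟨hflat _ (Or.inl rfl), hflat.hiβ_eq_zero⟩
  · ext c
    simp only [mem_iUnion, AffineInterval.mkInterval_shape]
    refine ⟨fun ⟨β, hβ, hp⟩ => ?_, fun ⟨m, hc⟩ => (hDfam m).sound x hx c hc⟩
    obtain ⟨d, hd, hc⟩ := exists_isCostRepr_of_pPath hdisc ha h0 hconsts hgrid hR' hp rfl hβ hR hx
    obtain ⟨m, rfl⟩ : d ∈ range D := hD ▸ hd.toIsCostFamily
    exact ⟨m, hc⟩

/-- **Corollary 4.** Fix locations `q, q'` and regions `r, r'` w.r.t. the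
constants `a 0 < … < a n` (which contain all guard constants of `A`, a one-clock PTA with
all discrete costs 0, and are integral multiples of `1/g` for some power `g` of the lcm
`C` of the positive cost rates). Then the set of costs of paths of `TTS_A` from `(q, x)`
(with `x ∈ r`) to some `(q', β)` with `β ∈ r'` is of the form
`⋃ m, ⟨α m − βl m · x, α' m − βr m · x⟩`, where every `α m`, `α' m` is an integral multiple
of `1/g` (or the interval is right-unbounded, i.e. `α' m = +∞`), every `βl m`, `βr m` is
either `0` or a cost rate of `A`, and if `r = (a n, +∞)` then `βl m = βr m = 0`. -/
theorem stmt4 {Q : Type} [Fintype Q] (A : PTA Q)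
    (hdisc : ∀ e ∈ A.E, e.dcost = 0)
    (g : ℕ) (hg : ∃ k : ℕ, g = posLcm A ^ k)
    (n : ℕ) (a : ℕ → ℝ) (h0 : a 0 = 0)
    (hmono : ∀ i j : ℕ, i ≤ n → j ≤ n → i < j → a i < a j)
    (hconsts : ∀ c ∈ PTA.consts A, ∃ i ≤ n, a i = (c : ℝ))
    (hmult : ∀ i ≤ n, ∃ k : ℕ, a i = (k : ℝ) / (g : ℝ))
    (q q' : Q) (r r' : Set ℝ) (hr : r ∈ Regions a n) (hr' : r' ∈ Regions a n) :
    ∃ (sh : ℕ → IShape) (α α' βl βr : ℕ → ℝ),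
      (∀ m : ℕ, ∃ z : ℤ, α m = (z : ℝ) / (g : ℝ)) ∧
      (∀ m : ℕ, sh m = IShape.ci ∨ sh m = IShape.oi ∨ ∃ z : ℤ, α' m = (z : ℝ) / (g : ℝ)) ∧
      (∀ m : ℕ, βl m = 0 ∨ ∃ l : Q, βl m = (A.rate l : ℝ)) ∧
      (∀ m : ℕ, βr m = 0 ∨ ∃ l : Q, βr m = (A.rate l : ℝ)) ∧
      (r = Set.Ioi (a n) → ∀ m : ℕ, βl m = 0 ∧ βr m = 0) ∧
      (∀ x ∈ r, {c : ℝ | ∃ β ∈ r', PPath A (q, x) c (q', β)} =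
        ⋃ m : ℕ, mkInterval (sh m) (α m - βl m * x) (α' m - βr m * x)) :=
  stmt4_general A hdisc g n a h0 hmono hconsts hmult q q' r r' hr hr'
end

section
/- Let A be a one-clock priced timed automaton with a single cost function and all discrete costs 0, and let (q,x) be a state of A. Then (q,x) ⊨ AφU_{≤c}ψ if and only if (q,x) ⊨ AφUψ and (q,x) ⊨ AF_{≤c}ψ, where AφUψ denotes the unconstrained until AφU_{≥0}ψ and AF_{∼c}θ denotes A(⊤U_{∼c}θ). -/
variable {Q : Type} [Fintype Q]

/-! ## WCTL: syntax and semantics -/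

/-- Syntax of WCTL over atomic propositions `AP` (with a trivially true formula `tt`). -/
inductive WCTL (AP : Type)
  | tt : WCTL AP
  | atom : AP → WCTL AP
  | not : WCTL AP → WCTL AP
  | or : WCTL AP → WCTL AP → WCTL AP
  | EU : WCTL AP → Cmp → ℕ → WCTL AP → WCTL AP
  | AU : WCTL AP → Cmp → ℕ → WCTL AP → WCTL AP

/-- An infinite run of `A` from `s₀`: an infinite sequence of mixed moves,
`cst n` being the cost of the `n`-th mixed move. -/
structure InfRun (A : PTA Q) (s₀ : Q × ℝ) where
  st : ℕ → Q × ℝ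
  cst : ℕ → ℝ
  first : st 0 = s₀
  step : ∀ n : ℕ, MixedMove A (st n) (cst n) (st (n + 1))

/-- Satisfaction of WCTL formulas over states of a labeled one-clock priced timed
automaton (`L` is the labeling function). -/
def WCTLsat {AP : Type} (A : PTA Q) (L : Q → AP → Prop) : WCTL AP → (Q × ℝ) → Prop
  | .tt, _ => True
  | .atom a, s => L s.1 a
  | .not φ, s => ¬ WCTLsat A L φ s
  | .or φ ψ, s => WCTLsat A L φ s ∨ WCTLsat A L ψ s
  | .EU φ cmp c ψ, s => ∃ ρ : InfRun A s, ∃ π : ℕ, 0 < π ∧ WCTLsat A L ψ (ρ.st π) ∧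
      (∀ π' : ℕ, 0 < π' → π' < π → WCTLsat A L φ (ρ.st π')) ∧
      Cmp.sat cmp (∑ i ∈ Finset.range π, ρ.cst i) (c : ℝ)
  | .AU φ cmp c ψ, s => ∀ ρ : InfRun A s, ∃ π : ℕ, 0 < π ∧ WCTLsat A L ψ (ρ.st π) ∧
      (∀ π' : ℕ, 0 < π' → π' < π → WCTLsat A L φ (ρ.st π')) ∧
      Cmp.sat cmp (∑ i ∈ Finset.range π, ρ.cst i) (c : ℝ)

/-- A cost constraint `∼ c` is trivial iff it is `≥ 0`. -/
def isTrivialC : Cmp → ℕ → Bool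
  | .ge, 0 => true
  | _, _ => false

/-- The constrained temporal height of a WCTL formula: the maximal number of nested
constrained modalities (modalities whose constraint is not equivalent to `≥ 0`). -/
def cheight {AP : Type} : WCTL AP → ℕ
  | .tt => 0
  | .atom _ => 0
  | .not φ => cheight φ
  | .or φ ψ => max (cheight φ) (cheight ψ)
  | .EU φ cmp c ψ => max (cheight φ) (cheight ψ) + (if isTrivialC cmp c then 0 else 1)
  | .AU φ cmp c ψ => max (cheight φ) (cheight ψ) + (if isTrivialC cmp c then 0 else 1)

def UntilAt {α : Type} (Φ Ψ : α → Prop) (σ : ℕ → α) (π : ℕ) : Prop :=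
  0 < π ∧ Ψ (σ π) ∧ ∀ π' : ℕ, 0 < π' → π' < π → Φ (σ π')

namespace UntilAt

variable {α : Type} {Φ Φ' Ψ : α → Prop} {σ : ℕ → α} {π π₁ π₂ : ℕ}

lemma mono_left (h : UntilAt Φ Ψ σ π) (hΦ : ∀ a, Φ a → Φ' a) : UntilAt Φ' Ψ σ π :=
  ⟨h.1, h.2.1, fun π' h₀ hlt => hΦ _ (h.2.2 π' h₀ hlt)⟩

lemma min (h₁ : UntilAt Φ Ψ σ π₁) (h₂ : UntilAt Φ' Ψ σ π₂) : UntilAt Φ Ψ σ (min π₁ π₂) := by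
  refine ⟨lt_min h₁.1 h₂.1, ?_, fun π' h₀ hlt => h₁.2.2 π' h₀ (hlt.trans_le (min_le_left _ _))⟩
  rcases le_total π₁ π₂ with h | h
  · simpa only [min_eq_left h] using h₁.2.1
  · simpa only [min_eq_right h] using h₂.2.1

end UntilAt

lemma MixedMove.cost_nonneg {A : PTA Q} {s s' : Q × ℝ} {c : ℝ} (h : MixedMove A s c s') :
    0 ≤ c := by
  obtain ⟨c₁, c₂, m, ⟨t, ht, -, rfl, -⟩, ⟨e, -, -, -, -, -, -, rfl⟩, rfl⟩ := h
  positivity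

namespace InfRun

variable {A : PTA Q} {s : Q × ℝ}

def prefixCost (ρ : InfRun A s) (π : ℕ) : ℝ := ∑ i ∈ Finset.range π, ρ.cst i

lemma prefixCost_monotone (ρ : InfRun A s) : Monotone ρ.prefixCost :=
  monotone_nat_of_le_succ fun n => by
    simpa only [prefixCost, Finset.sum_range_succ, le_add_iff_nonneg_right]
      using (ρ.step n).cost_nonneg

lemma prefixCost_nonneg (ρ : InfRun A s) (π : ℕ) : 0 ≤ ρ.prefixCost π := by
  simpa only [prefixCost, Finset.sum_range_zero] using ρ.prefixCost_monotone (Nat.zero_le π)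

end InfRun

lemma wctlsat_AU_iff {AP : Type} (A : PTA Q) (L : Q → AP → Prop) (φ ψ : WCTL AP) (cmp : Cmp)
    (c : ℕ) (s : Q × ℝ) :
    WCTLsat A L (.AU φ cmp c ψ) s ↔ ∀ ρ : InfRun A s, ∃ π : ℕ,
      UntilAt (WCTLsat A L φ) (WCTLsat A L ψ) ρ.st π ∧ Cmp.sat cmp (ρ.prefixCost π) c := by
  simp only [WCTLsat, UntilAt, InfRun.prefixCost, and_assoc]

theorem stmt8_general {Q AP : Type} [Fintype Q] (A : PTA Q) (L : Q → AP → Prop)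
    (φ ψ : WCTL AP) (c : ℕ) (q : Q) (x : ℝ) :
    WCTLsat A L (.AU φ .le c ψ) (q, x) ↔
      (WCTLsat A L (.AU φ .ge 0 ψ) (q, x) ∧
       WCTLsat A L (.AU .tt .le c ψ) (q, x)) := by
  simp only [wctlsat_AU_iff, Cmp.sat, Nat.cast_zero]
  constructor
  · intro h
    exact ⟨fun ρ => (h ρ).imp fun π hπ => ⟨hπ.1, ρ.prefixCost_nonneg π⟩,
      fun ρ => (h ρ).imp fun π hπ => ⟨hπ.1.mono_left fun _ _ => trivial, hπ.2⟩⟩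
  · rintro ⟨hU, hF⟩ ρ
    obtain ⟨π₁, h₁, -⟩ := hU ρ
    obtain ⟨π₂, h₂, hc⟩ := hF ρ
    -- the earlier of the two witnesses keeps `φ` before it and costs at most the `ψ`-witness
    exact ⟨min π₁ π₂, h₁.min h₂, (ρ.prefixCost_monotone (min_le_right _ _)).trans hc⟩

/-- For a one-clock PTA with a single cost function and all discrete costs 0,
`(q,x) ⊨ AφU_{≤c}ψ` iff `(q,x) ⊨ AφUψ` and `(q,x) ⊨ AF_{≤c}ψ`. -/
theorem stmt8 {Q AP : Type} [Fintype Q] (A : PTA Q) (L : Q → AP → Prop)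
    (hnb : NonBlocking A) (hdisc : ∀ e ∈ A.E, e.dcost = 0)
    (φ ψ : WCTL AP) (c : ℕ) (q : Q) (x : ℝ) (hx : 0 ≤ x) :
    WCTLsat A L (.AU φ .le c ψ) (q, x) ↔
      (WCTLsat A L (.AU φ .ge 0 ψ) (q, x) ∧
       WCTLsat A L (.AU .tt .le c ψ) (q, x)) :=
  stmt8_general A L φ ψ c q x
end

section
/- Let A be a one-clock priced timed automaton with a single cost function and all discrete costs 0, and let (q,x) be a state of A. Then (q,x) ⊨ AφU_{=c}ψ if and only if (q,x) ⊨ AφU_{≥c}ψ and (q,x) ⊨ AF_{=c}ψ, where AF_{∼c}θ denotes A(⊤U_{∼c}θ). -/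
variable {Q : Type} [Fintype Q]

/-!
Costs of mixed moves are nonnegative, so the accumulated cost along a run is monotone in the
position. Given a run, take a position π₁ witnessing `φ U_{≥c} ψ` and a ψ-position π₂ of cost
exactly `c`. If π₂ ≤ π₁, then φ holds strictly before π₂ and π₂ witnesses `φ U_{=c} ψ`;
otherwise the cost at π₁ lies between `c` and the cost `c` at π₂, so π₁ itself does.
-/

namespace InfRun

variable {A : PTA Q} {s : Q × ℝ}

lemma cst_nonneg (ρ : InfRun A s) (n : ℕ) : 0 ≤ ρ.cst n := by
  obtain ⟨c₁, c₂, m, ⟨t, ht, -, hc₁, -⟩, ⟨e, -, -, -, -, -, -, hc₂⟩, hc⟩ := ρ.step n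
  rw [hc, hc₁, hc₂]
  positivity

lemma monotone_cost (ρ : InfRun A s) : Monotone fun n => ∑ i ∈ Finset.range n, ρ.cst i :=
  fun _ _ hmn => Finset.sum_le_sum_of_subset_of_nonneg (Finset.range_subset_range.mpr hmn)
    fun i _ _ => ρ.cst_nonneg i

end InfRun

section AU

variable {AP : Type} {A : PTA Q} {L : Q → AP → Prop} {s : Q × ℝ} {c : ℕ}

lemma WCTLsat_AU_mono {φ φ' ψ : WCTL AP} {cmp cmp' : Cmp}
    (hφ : ∀ s, WCTLsat A L φ s → WCTLsat A L φ' s)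
    (hcmp : ∀ r : ℝ, cmp.sat r c → cmp'.sat r c)
    (h : WCTLsat A L (.AU φ cmp c ψ) s) : WCTLsat A L (.AU φ' cmp' c ψ) s := fun ρ => by
  obtain ⟨π, hπ, hψ, hφπ, hcost⟩ := h ρ
  exact ⟨π, hπ, hψ, fun π' h₀ hlt => hφ _ (hφπ π' h₀ hlt), hcmp _ hcost⟩

lemma WCTLsat_AU_eq_of_AU_ge_of_AF_eq {φ ψ : WCTL AP}
    (hge : WCTLsat A L (.AU φ .ge c ψ) s) (hF : WCTLsat A L (.AU .tt .eq c ψ) s) :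
    WCTLsat A L (.AU φ .eq c ψ) s := fun ρ => by
  obtain ⟨π₁, hπ₁, hψ₁, hφ₁, hcost₁⟩ := hge ρ
  obtain ⟨π₂, hπ₂, hψ₂, -, hcost₂⟩ := hF ρ
  rcases le_or_gt π₂ π₁ with hle | hlt
  · exact ⟨π₂, hπ₂, hψ₂, fun π' h₀ hlt' => hφ₁ π' h₀ (hlt'.trans_le hle), hcost₂⟩
  · have hcost : ∑ i ∈ Finset.range π₁, ρ.cst i = c :=
      le_antisymm (hcost₂ ▸ ρ.monotone_cost hlt.le) hcost₁
    exact ⟨π₁, hπ₁, hψ₁, hφ₁, hcost⟩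

end AU

theorem stmt9_general {Q AP : Type} [Fintype Q] (A : PTA Q) (L : Q → AP → Prop)
    (φ ψ : WCTL AP) (c : ℕ) (q : Q) (x : ℝ) :
    WCTLsat A L (.AU φ .eq c ψ) (q, x) ↔
      (WCTLsat A L (.AU φ .ge c ψ) (q, x) ∧
       WCTLsat A L (.AU .tt .eq c ψ) (q, x)) :=
  ⟨fun h => ⟨WCTLsat_AU_mono (cmp := .eq) (fun _ => id) (fun _ => ge_of_eq) h,
      WCTLsat_AU_mono (fun _ _ => trivial) (fun _ => id) h⟩,
    fun ⟨hge, hF⟩ => WCTLsat_AU_eq_of_AU_ge_of_AF_eq hge hF⟩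

/-- For a one-clock PTA with a single cost function and all discrete costs 0,
`(q,x) ⊨ AφU_{=c}ψ` iff `(q,x) ⊨ AφU_{≥c}ψ` and `(q,x) ⊨ AF_{=c}ψ`. -/
theorem stmt9 {Q AP : Type} [Fintype Q] (A : PTA Q) (L : Q → AP → Prop)
    (hnb : NonBlocking A) (hdisc : ∀ e ∈ A.E, e.dcost = 0)
    (φ ψ : WCTL AP) (c : ℕ) (q : Q) (x : ℝ) (hx : 0 ≤ x) :
    WCTLsat A L (.AU φ .eq c ψ) (q, x) ↔
      (WCTLsat A L (.AU φ .ge c ψ) (q, x) ∧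
       WCTLsat A L (.AU .tt .eq c ψ) (q, x)) :=
  stmt9_general A L φ ψ c q x
end

section
/- Consider the one-clock priced timed automaton module Mod (for incrementing a counter) with locations A, B, C, D with cost rates cost(A)=1, cost(B)=1, cost(C)=2, cost(D)=1, invariant x ≤ 1 on B, transitions A→B (guard x ≤ 1, no reset, discrete cost 0), B→C (guard x = 1, reset x:=0, discrete cost 0), C→D (no guard, no reset, discrete cost 2). Suppose there is a run ρ entering the module at A with clock value x = x₀ ≤ 1 and exiting at D with clock value x = x₁, such that no time elapses in A and in D, and the accumulated cost of ρ between A and D equals 3. Then x₁ = x₀/2. -/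
variable {Q : Type} [Fintype Q]

/-! ## Finite runs (sequences of mixed moves) -/

/-- A finite run of `A` with `k` mixed moves: `st i` is the `i`-th state, the `i`-th mixed
move delays for `d i` time units (with the invariant satisfied throughout) and then takes
a discrete move of cost `cc i` to `st (i+1)`. -/
structure FinRun (A : PTA Q) (k : ℕ) where
  st : ℕ → Q × ℝ
  d : ℕ → ℝ
  cc : ℕ → ℝ
  hdel : ∀ i < k, 0 ≤ d i ∧
    ∀ t' : ℝ, 0 ≤ t' → t' ≤ d i → PGuard.sat (A.Inv (st i).1) ((st i).2 + t')
  hdisc : ∀ i < k, DiscMove A ((st i).1, (st i).2 + d i) (cc i) (st (i + 1))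

/-- Cost of the `i`-th mixed move of a finite run. -/
def FinRun.stepCost {A : PTA Q} {k : ℕ} (ρ : FinRun A k) (i : ℕ) : ℝ :=
  ρ.d i * (A.rate (ρ.st i).1 : ℝ) + ρ.cc i

/-- Locations of the increment module. -/
inductive L11
  | A | B | C | D
  deriving DecidableEq

instance : Fintype L11 :=
  ⟨{L11.A, L11.B, L11.C, L11.D}, fun x => by cases x <;> simp⟩

/-- The increment module: rates `A:1, B:1, C:2, D:1`, invariant `x ≤ 1` on `B`,
transitions `A→B (x≤1)`, `B→C (x=1, x:=0)`, `C→D (discrete cost 2)`. -/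
def Mod11 : PTA L11 where
  init := .A
  E := {e | e ∈ [(⟨.A, [(Cmp.le, 1)], false, .B, 0⟩ : PTrans L11),
               ⟨.B, [(Cmp.eq, 1)], true, .C, 0⟩,
               ⟨.C, [], false, .D, 2⟩]}
  finE := List.finite_toSet _
  Inv := fun q => match q with
    | .B => [(Cmp.le, 1)]
    | _ => []
  rate := fun q => match q with
    | .C => 2
    | _ => 1

/-! The transitions of `Mod11` are deterministic, `A → B → C → D`, and `D` has no exit, so
every run from `A` to `D` is exactly `A, B, C, D`. Leaving `B` requires `x = 1`, so a run
entering `B` with clock value `v` spends `1 - v` time units there at rate `1`; `C` is entered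
with `x = 0` and left with `x = x₁`, costing `2 x₁`, plus the discrete cost `2` of `C → D`.
Entering with `v = x₀`, the total cost is `3 - x₀ + 2 x₁`, which equals `3` iff `x₁ = x₀ / 2`. -/

namespace FinRun

variable {A : PTA Q} {k : ℕ}

def tail (ρ : FinRun A (k + 1)) : FinRun A k where
  st i := ρ.st (i + 1)
  d i := ρ.d (i + 1)
  cc i := ρ.cc (i + 1)
  hdel i hi := ρ.hdel (i + 1) (by omega)
  hdisc i hi := ρ.hdisc (i + 1) (by omega)

theorem sum_stepCost_eq_add_tail (ρ : FinRun A (k + 1)) :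
    ∑ i ∈ Finset.range (k + 1), ρ.stepCost i =
      ρ.stepCost 0 + ∑ i ∈ Finset.range k, ρ.tail.stepCost i := by
  rw [Finset.sum_range_succ', add_comm]
  rfl

theorem length_pos (ρ : FinRun A k) (h : (ρ.st 0).1 ≠ (ρ.st k).1) : 0 < k := by
  refine Nat.pos_of_ne_zero ?_
  rintro rfl
  exact h rfl

end FinRun

namespace Mod11

variable {v c : ℝ} {s : L11 × ℝ}

theorem mem_E {e : PTrans L11} :
    e ∈ Mod11.E ↔ e = ⟨.A, [(Cmp.le, 1)], false, .B, 0⟩ ∨ e = ⟨.B, [(Cmp.eq, 1)], true, .C, 0⟩ ∨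
      e = ⟨.C, [], false, .D, 2⟩ := by
  simp [Mod11]

theorem discMove_from_A (h : DiscMove Mod11 (.A, v) c s) : s = (.B, v) ∧ c = 0 := by
  obtain ⟨e, he, hsrc, htgt, -, hreset, -, hc⟩ := h
  rw [mem_E] at he
  rcases he with rfl | rfl | rfl <;> simp_all [Prod.ext_iff]

theorem discMove_from_B (h : DiscMove Mod11 (.B, v) c s) : v = 1 ∧ s = (.C, 0) ∧ c = 0 := by
  obtain ⟨e, he, hsrc, htgt, hguard, hreset, -, hc⟩ := h
  rw [mem_E] at he
  rcases he with rfl | rfl | rfl <;> simp_all [Prod.ext_iff, PGuard.sat, Cmp.sat]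

theorem discMove_from_C (h : DiscMove Mod11 (.C, v) c s) : s = (.D, v) ∧ c = 2 := by
  obtain ⟨e, he, hsrc, htgt, -, hreset, -, hc⟩ := h
  rw [mem_E] at he
  rcases he with rfl | rfl | rfl <;> simp_all [Prod.ext_iff]

theorem not_discMove_from_D : ¬ DiscMove Mod11 (.D, v) c s := by
  rintro ⟨e, he, hsrc, -⟩
  rw [mem_E] at he
  rcases he with rfl | rfl | rfl <;> simp at hsrc

variable {k : ℕ} (ρ : FinRun Mod11 k) {x₁ : ℝ}

theorem length_eq_zero_of_start_D (h0 : (ρ.st 0).1 = .D) : k = 0 := by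
  by_contra hk
  exact not_discMove_from_D (h0 ▸ ρ.hdisc 0 (Nat.pos_of_ne_zero hk))

theorem runCost_C_to_D (h0 : ρ.st 0 = (.C, v)) (hk : ρ.st k = (.D, x₁)) :
    ∑ i ∈ Finset.range k, ρ.stepCost i = 2 * (x₁ - v) + 2 := by
  obtain ⟨k, rfl⟩ := Nat.exists_eq_add_one_of_ne_zero (ρ.length_pos (by simp [h0, hk])).ne'
  obtain ⟨hst1, hcc⟩ := discMove_from_C (h0 ▸ ρ.hdisc 0 (by omega))
  obtain rfl : k = 0 := length_eq_zero_of_start_D ρ.tail (by simp [FinRun.tail, hst1])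
  have hx₁ : x₁ = v + ρ.d 0 := by simpa [hst1] using hk.symm
  rw [Finset.sum_range_one, FinRun.stepCost, h0, hcc, hx₁]
  simp only [Mod11]
  push_cast
  ring

theorem runCost_B_to_D (h0 : ρ.st 0 = (.B, v)) (hk : ρ.st k = (.D, x₁)) :
    ∑ i ∈ Finset.range k, ρ.stepCost i = (1 - v) + 2 * x₁ + 2 := by
  obtain ⟨k, rfl⟩ := Nat.exists_eq_add_one_of_ne_zero (ρ.length_pos (by simp [h0, hk])).ne'
  obtain ⟨hleave, hst1, hcc⟩ := discMove_from_B (h0 ▸ ρ.hdisc 0 (by omega))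
  rw [ρ.sum_stepCost_eq_add_tail, runCost_C_to_D ρ.tail hst1 hk]
  simp only [FinRun.stepCost, h0, hcc, Mod11]
  push_cast
  linarith

theorem runCost_A_to_D (h0 : ρ.st 0 = (.A, v)) (hk : ρ.st k = (.D, x₁)) (hd : ρ.d 0 = 0) :
    ∑ i ∈ Finset.range k, ρ.stepCost i = (1 - v) + 2 * x₁ + 2 := by
  obtain ⟨k, rfl⟩ := Nat.exists_eq_add_one_of_ne_zero (ρ.length_pos (by simp [h0, hk])).ne'
  obtain ⟨hst1, hcc⟩ := discMove_from_A (h0 ▸ hd ▸ ρ.hdisc 0 (by omega))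
  rw [ρ.sum_stepCost_eq_add_tail, runCost_B_to_D ρ.tail hst1 hk]
  simp [FinRun.stepCost, hd, hcc]

end Mod11

theorem stmt11_general (x₀ x₁ : ℝ)
    (k : ℕ) (ρ : FinRun Mod11 k)
    (hstart : ρ.st 0 = (L11.A, x₀)) (hend : ρ.st k = (L11.D, x₁))
    (hA : ∀ i < k, (ρ.st i).1 = L11.A → ρ.d i = 0)
    (hcost : ∑ i ∈ Finset.range k, ρ.stepCost i = 3) :
    x₁ = x₀ / 2 := by
  have hk : 0 < k := ρ.length_pos (by simp [hstart, hend])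
  have hrun := Mod11.runCost_A_to_D ρ hstart hend (hA 0 hk (by simp [hstart]))
  linarith

/-- **Lemma 12.** If a run enters the increment module at `A` with clock
value `x₀ ≤ 1` and exits at `D` with clock value `x₁`, with no time elapsing in `A` and
`D`, and the accumulated cost between `A` and `D` equals `3`, then `x₁ = x₀ / 2`. -/
theorem stmt11 (x₀ x₁ : ℝ) (hx₀ : 0 ≤ x₀) (hx₁ : x₀ ≤ 1)
    (k : ℕ) (ρ : FinRun Mod11 k)
    (hstart : ρ.st 0 = (L11.A, x₀)) (hend : ρ.st k = (L11.D, x₁))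
    (hA : ∀ i < k, (ρ.st i).1 = L11.A → ρ.d i = 0)
    (hD : ∀ i < k, (ρ.st i).1 = L11.D → ρ.d i = 0)
    (hcost : ∑ i ∈ Finset.range k, ρ.stepCost i = 3) :
    x₁ = x₀ / 2 :=
  stmt11_general x₀ x₁ k ρ hstart hend hA hcost
end

section
/- Consider the one-clock priced timed automaton module Mod (for testing/decrementing counter c₁) with locations and cost rates A₀(1), B₀(3), C₀(1), A(1), B(3), C(1), C'(1), D(1), E₁(3), E₂(3), F₁(1), F₂(1), G₁(3), G₂(3), H₁(1), H₂(1), A₂(1), B₂(2), C₂(1), D₂(1); transitions (all of discrete cost 0 except C₂→D₂ of discrete cost 1): A₀→B₀ (x<1), B₀→C₀ (x=1, x:=0), C₀→C, C→D, D→A (x<1), A→B, B→C (x=1, x:=0), C→C', C'→C, D→E₁ (x=1, x:=0), D→E₂ (x>1, x:=0), E₁→F₁, E₂→F₂, F₁→G₁ (x:=0), F₂→G₂ (x:=0), G₁→H₁, G₂→H₂, H₂→A₂, A₂→B₂, B₂→C₂ (x=1, x:=0), C₂→D₂, plus an exit from A₀ (x=1) and from H₁ to module Mod_j, and an exit from D₂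 to module Mod_k. Suppose there is a run ρ entering Mod at A₀ with clock value x = x₀ ≤ 1 and exiting towards Mod_j with clock value x = x₁, such that: (i) no time elapses in A₀, C₀, D, A, C', F₁ and H₁; (ii) every visit to C₀ or C' is eventually strictly followed by a visit to C' or F₁; (iii) the accumulated cost of ρ equals exactly 3 along each portion between A or A₀ and the next visit to D, along each portion between C₀ or C' and the next visit to C' or F₁, and along the portion between the last visit to D and H₁. Then x₁ = x₀ and there exists n ∈ ℕ such that x₀ = 3^(−n). -/
variable {Q : Type} [Fintype Q]

/-- Locations of the test/decrement module (for counter `c₁`), plus the entry points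
`ExitJ` of module `Mod_j` and `ExitK` of module `Mod_k`. -/
inductive L12
  | A0 | B0 | C0 | A | B | C | C' | D | E1 | E2 | F1 | F2 | G1 | G2 | H1 | H2
  | A2 | B2 | C2 | D2 | ExitJ | ExitK
  deriving DecidableEq

instance : Fintype L12 :=
  Fintype.ofList [.A0, .B0, .C0, .A, .B, .C, .C', .D, .E1, .E2, .F1, .F2, .G1, .G2, .H1, .H2,
    .A2, .B2, .C2, .D2, .ExitJ, .ExitK] (by intro x; cases x <;> simp)

/-- Transitions of the test/decrement module (all of discrete cost 0 except `C₂→D₂`,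
of discrete cost 1), including the exits towards `Mod_j` (from `A₀` on `x=1` and from
`H₁`) and towards `Mod_k` (from `D₂`). -/
def trans12 : List (PTrans L12) :=
  [⟨.A0, [(Cmp.lt, 1)], false, .B0, 0⟩,
   ⟨.B0, [(Cmp.eq, 1)], true, .C0, 0⟩,
   ⟨.C0, [], false, .C, 0⟩,
   ⟨.C, [], false, .D, 0⟩,
   ⟨.D, [(Cmp.lt, 1)], false, .A, 0⟩,
   ⟨.A, [], false, .B, 0⟩,
   ⟨.B, [(Cmp.eq, 1)], true, .C, 0⟩,
   ⟨.C, [], false, .C', 0⟩,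
   ⟨.C', [], false, .C, 0⟩,
   ⟨.D, [(Cmp.eq, 1)], true, .E1, 0⟩,
   ⟨.D, [(Cmp.gt, 1)], true, .E2, 0⟩,
   ⟨.E1, [], false, .F1, 0⟩,
   ⟨.E2, [], false, .F2, 0⟩,
   ⟨.F1, [], true, .G1, 0⟩,
   ⟨.F2, [], true, .G2, 0⟩,
   ⟨.G1, [], false, .H1, 0⟩,
   ⟨.G2, [], false, .H2, 0⟩,
   ⟨.H2, [], false, .A2, 0⟩,
   ⟨.A2, [], false, .B2, 0⟩,
   ⟨.B2, [(Cmp.eq, 1)], true, .C2, 0⟩,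
   ⟨.C2, [], false, .D2, 1⟩,
   ⟨.A0, [(Cmp.eq, 1)], false, .ExitJ, 0⟩,
   ⟨.H1, [], false, .ExitJ, 0⟩,
   ⟨.D2, [], false, .ExitK, 0⟩]

/-- The test/decrement module, with cost rates
`A₀,C₀,A,C,C',D,F₁,F₂,H₁,H₂,A₂,C₂,D₂ : 1`, `B₀,B,E₁,E₂,G₁,G₂ : 3`, `B₂ : 2`. -/
def Mod12 : PTA L12 where
  init := .A0
  E := {e | e ∈ trans12}
  finE := List.finite_toSet _
  Inv := fun _ => []
  rate := fun q => match q with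
    | .B0 | .B | .E1 | .E2 | .G1 | .G2 => 3
    | .B2 => 2
    | _ => 1

/-!
Write `cost j` for the cost of the first `j` mixed moves. In `C` and `C'` the clock runs at
the cost rate 1 from its reset in `B₀` or `B`, so a visit to `D` sees the clock value `t` spent
since then; as the way from `A₀`/`A` (clock `y`) to `D` costs `3 (1 - y) + t = 3`, the clock at
the `r`-th visit to `D` is `3^r x₀`. The run can reach `Mod_j` only through `D → E₁` at `x = 1`,
so `3^N x₀ = 1`. On the way `D → H₁`, delays `u` in `E₁` and `w` in `G₁` cost `3u + 3w = 3`,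
and `x₁ = w = 1 - u`. Finally the cost from `C₀` to `F₁` telescopes to `3 (N - 1) + 3 (x₀ + u)`
and is a multiple of 3 by the segment condition on `C₀`/`C'`; since `0 < x₀ < 1` and
`0 ≤ u ≤ 1`, this forces `x₀ + u = 1`, that is `x₁ = x₀`.
-/

namespace FinRun

variable {A : PTA Q} {k : ℕ}

def cost (ρ : FinRun A k) (j : ℕ) : ℝ := ∑ m ∈ Finset.range j, ρ.stepCost m

lemma cost_succ (ρ : FinRun A k) (i : ℕ) :
    ρ.cost (i + 1) = ρ.cost i + ρ.d i * A.rate (ρ.st i).1 + ρ.cc i := by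
  rw [cost, Finset.sum_range_succ, stepCost, add_assoc]
  rfl

lemma sum_Ico_stepCost (ρ : FinRun A k) {i j : ℕ} (hij : i ≤ j) :
    ∑ m ∈ Finset.Ico i j, ρ.stepCost m = ρ.cost j - ρ.cost i :=
  Finset.sum_Ico_eq_sub _ hij

end FinRun

def PTA.IsForwardClosed (A : PTA Q) (T : Set Q) : Prop :=
  ∀ e ∈ A.E, e.src ∈ T → e.tgt ∈ T

lemma FinRun.fst_mem_of_isForwardClosed {A : PTA Q} {k : ℕ} (ρ : FinRun A k) {T : Set Q}
    (hT : A.IsForwardClosed T) {i j : ℕ} (hij : i ≤ j) (hjk : j ≤ k) (hi : (ρ.st i).1 ∈ T) :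
    (ρ.st j).1 ∈ T := by
  induction j, hij using Nat.le_induction with
  | base => exact hi
  | succ j hij ih =>
    obtain ⟨e, he, hsrc, htgt, -⟩ := ρ.hdisc j (by omega)
    exact htgt ▸ hT e he (hsrc ▸ ih (by omega))

lemma exists_sub_eq_nsmul_of_segment_costs {G : Type*} [AddCommGroup G] (S : ℕ → G) (c : G)
    {s t e : ℕ → Prop} {k : ℕ}
    (hfollow : ∀ i ≤ k, s i → ∃ j, i < j ∧ j ≤ k ∧ t j)
    (hseg : ∀ i j, i < j → j ≤ k → s i → t j → (∀ m, i < m → m < j → ¬ t m) → S j - S i = c)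
    (hts : ∀ j, t j → s j ∨ e j) {i : ℕ} (hik : i ≤ k) (hi : s i) :
    ∃ (M : ℕ) (j : ℕ), j ≤ k ∧ e j ∧ S j - S i = M • c := by
  classical
  induction hn : k - i using Nat.strong_induction_on generalizing i with
  | _ n ih =>
    have hex := hfollow i hik hi
    obtain ⟨hij, hjk, htj⟩ := Nat.find_spec hex
    have hcost := hseg i _ hij hjk hi htj fun m him hmj htm =>
      Nat.find_min hex hmj ⟨him, by omega, htm⟩
    rcases hts _ htj with hsj | hej
    · obtain ⟨M, j, hj, hej, hM⟩ := ih _ (by omega) hjk hsj rfl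
      exact ⟨M + 1, j, hj, hej, by rw [succ_nsmul, ← hM, ← hcost]; abel⟩
    · exact ⟨1, _, hjk, hej, by rw [one_smul, hcost]⟩

namespace Mod12

/-- `Next q v s c`: some transition of `Mod12` leaves `q` at clock value `v`, costs `c` and
leads to the state `s`. -/
def Next : L12 → ℝ → L12 × ℝ → ℝ → Prop
  | .A0, v, s, c => ((v < 1 ∧ s = (.B0, v)) ∨ (v = 1 ∧ s = (.ExitJ, v))) ∧ c = 0
  | .B0, v, s, c => v = 1 ∧ s = (.C0, 0) ∧ c = 0
  | .C0, v, s, c => s = (.C, v) ∧ c = 0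
  | .C, v, s, c => (s = (.D, v) ∨ s = (.C', v)) ∧ c = 0
  | .C', v, s, c => s = (.C, v) ∧ c = 0
  | .A, v, s, c => s = (.B, v) ∧ c = 0
  | .B, v, s, c => v = 1 ∧ s = (.C, 0) ∧ c = 0
  | .D, v, s, c => ((v < 1 ∧ s = (.A, v)) ∨ (v = 1 ∧ s = (.E1, 0)) ∨ (1 < v ∧ s = (.E2, 0))) ∧ c = 0
  | .E1, v, s, c => s = (.F1, v) ∧ c = 0
  | .E2, v, s, c => s = (.F2, v) ∧ c = 0
  | .F1, _, s, c => s = (.G1, 0) ∧ c = 0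
  | .F2, _, s, c => s = (.G2, 0) ∧ c = 0
  | .G1, v, s, c => s = (.H1, v) ∧ c = 0
  | .G2, v, s, c => s = (.H2, v) ∧ c = 0
  | .H1, v, s, c => s = (.ExitJ, v) ∧ c = 0
  | .H2, v, s, c => s = (.A2, v) ∧ c = 0
  | .A2, v, s, c => s = (.B2, v) ∧ c = 0
  | .B2, v, s, c => v = 1 ∧ s = (.C2, 0) ∧ c = 0
  | .C2, v, s, c => s = (.D2, v) ∧ c = 1
  | .D2, v, s, c => s = (.ExitK, v) ∧ c = 0
  | .ExitJ, _, _, _ => False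
  | .ExitK, _, _, _ => False

lemma next_of_discMove {q : L12} {v c : ℝ} {s : L12 × ℝ} (h : DiscMove Mod12 (q, v) c s) :
    Next q v s c := by
  obtain ⟨e, he, hsrc, htgt, hg, hval, -, hc⟩ := h
  have he' : e ∈ trans12 := he
  fin_cases he' <;> simp only at hsrc htgt hg hval hc <;> subst hsrc <;>
    simp_all [Next, PGuard.sat, Cmp.sat, Prod.ext_iff]

variable {k : ℕ} {ρ : FinRun Mod12 k}

def NoDelayInUrgent (ρ : FinRun Mod12 k) : Prop :=
  ∀ i < k, (ρ.st i).1 ∈ ([L12.A0, L12.C0, L12.D, L12.A, L12.C', L12.F1, L12.H1] : List L12) →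
    ρ.d i = 0

lemma next_of_ne_exitJ (hend : (ρ.st k).1 = .ExitJ) {i : ℕ} {q : L12} {v : ℝ} (hi : i ≤ k)
    (hst : ρ.st i = (q, v)) (hq : q ≠ .ExitJ) :
    i < k ∧ Next q (v + ρ.d i) (ρ.st (i + 1)) (ρ.cc i) := by
  have hik : i < k := lt_of_le_of_ne hi fun h => hq (by subst h; rwa [hst] at hend)
  have hmove := ρ.hdisc i hik
  rw [hst] at hmove
  exact ⟨hik, next_of_discMove hmove⟩

lemma eq_of_exitJ {i : ℕ} {v : ℝ} (hi : i ≤ k) (hst : ρ.st i = (.ExitJ, v)) : i = k := by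
  by_contra hne
  have hmove := ρ.hdisc i (by omega)
  rw [hst] at hmove
  exact next_of_discMove hmove

lemma isForwardClosed_toExitK :
    Mod12.IsForwardClosed {.E2, .F2, .G2, .H2, .A2, .B2, .C2, .D2, .ExitK} := by
  intro e he
  have he' : e ∈ trans12 := he
  fin_cases he' <;> simp

lemma isForwardClosed_fromE1 : Mod12.IsForwardClosed {.E1, .F1, .G1, .H1, .ExitJ} := by
  intro e he
  have he' : e ∈ trans12 := he
  fin_cases he' <;> simp

lemma fst_ne_E2 (hend : (ρ.st k).1 = .ExitJ) {i : ℕ} (hi : i ≤ k) : (ρ.st i).1 ≠ .E2 := by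
  intro hE2
  have := ρ.fst_mem_of_isForwardClosed isForwardClosed_toExitK hi le_rfl (by simp [hE2])
  simp [hend] at this

lemma fst_ne_D_of_E1 {i j : ℕ} (hE1 : (ρ.st i).1 = .E1) (hij : i ≤ j) (hjk : j ≤ k) :
    (ρ.st j).1 ≠ .D := by
  intro hD
  have := ρ.fst_mem_of_isForwardClosed isForwardClosed_fromE1 hij hjk (by simp [hE1])
  simp [hD] at this

lemma cost_succ_eq {i : ℕ} {q : L12} {v : ℝ} (hst : ρ.st i = (q, v)) :
    ρ.cost (i + 1) = ρ.cost i + ρ.d i * Mod12.rate q + ρ.cc i := by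
  rw [FinRun.cost_succ, hst]

lemma run_from_A0 (hend : (ρ.st k).1 = .ExitJ) (hnotime : NoDelayInUrgent ρ)
    {j : ℕ} {x : ℝ} (hj : j ≤ k) (hst : ρ.st j = (.A0, x)) :
    (x = 1 ∧ k = j + 1 ∧ ρ.st k = (.ExitJ, x)) ∨
    (x < 1 ∧ j + 3 ≤ k ∧ (ρ.st (j + 1)).1 = .B0 ∧ ρ.st (j + 2) = (.C0, 0) ∧
      ρ.st (j + 3) = (.C, 0) ∧ ρ.cost (j + 2) = ρ.cost j + 3 * (1 - x) ∧
      ρ.cost (j + 3) = ρ.cost (j + 2)) := by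
  obtain ⟨hjk, hnext, hcc⟩ := next_of_ne_exitJ hend hj hst (by decide)
  have hd := hnotime j hjk (by simp [hst])
  rw [hd, add_zero] at hnext
  rcases hnext with ⟨hx, hB0⟩ | ⟨hx, hexit⟩
  · obtain ⟨hj1, hx1, hC0, hcc1⟩ := next_of_ne_exitJ hend hjk hB0 (by decide)
    obtain ⟨hj2, hC, hcc2⟩ := next_of_ne_exitJ hend hj1 hC0 (by decide)
    have hd2 := hnotime (j + 1 + 1) hj2 (by simp [hC0])
    rw [hd2, add_zero] at hC
    have h0 : ρ.cost (j + 1) = ρ.cost j := by rw [cost_succ_eq hst, hd, hcc]; simp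
    have h1 : ρ.cost (j + 1 + 1) = ρ.cost (j + 1) + 3 * ρ.d (j + 1) := by
      rw [cost_succ_eq hB0, hcc1]; simp [Mod12, mul_comm]
    have h2 : ρ.cost (j + 1 + 1 + 1) = ρ.cost (j + 1 + 1) := by
      rw [cost_succ_eq hC0, hd2, hcc2]; simp
    exact Or.inr ⟨hx, hj2, by rw [hB0], hC0, hC, (by linarith : ρ.cost (j + 1 + 1) = _), h2⟩
  · have hk := eq_of_exitJ hjk hexit
    subst hk
    exact Or.inl ⟨hx, rfl, hexit⟩

lemma run_through_C (hend : (ρ.st k).1 = .ExitJ) (hnotime : NoDelayInUrgent ρ)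
    {i : ℕ} {v : ℝ} (hi : i ≤ k) (hst : ρ.st i = (.C, v)) :
    ∃ j, i < j ∧ j ≤ k ∧ ρ.st j = (.D, v + (ρ.cost j - ρ.cost i)) ∧
      ∀ m, i ≤ m → m < j → (ρ.st m).1 = .C ∨ (ρ.st m).1 = .C' := by
  induction hn : k - i using Nat.strong_induction_on generalizing i v with
  | _ n ih =>
    obtain ⟨hik, hnext, hcc⟩ := next_of_ne_exitJ hend hi hst (by decide)
    have hcost : ρ.cost (i + 1) = ρ.cost i + ρ.d i := by
      rw [cost_succ_eq hst, hcc]; simp [Mod12]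
    rcases hnext with hD | hC'
    · refine ⟨i + 1, by omega, hik, by rw [hD, hcost]; congr 1; ring, fun m him hmi => ?_⟩
      obtain rfl : m = i := by omega
      simp [hst]
    · obtain ⟨hi1, hC, hcc1⟩ := next_of_ne_exitJ hend hik hC' (by decide)
      have hd1 := hnotime (i + 1) hi1 (by simp [hC'])
      have hcost1 : ρ.cost (i + 1 + 1) = ρ.cost (i + 1) := by
        rw [cost_succ_eq hC', hd1, hcc1]; simp
      rw [hd1, add_zero] at hC
      obtain ⟨j, hij, hjk, hD, hCC'⟩ := ih _ (by omega) hi1 hC rfl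
      refine ⟨j, by omega, hjk, by rw [hD, hcost1, hcost]; congr 1; ring, fun m him hmj => ?_⟩
      rcases (by omega : m = i ∨ m = i + 1 ∨ i + 1 + 1 ≤ m) with rfl | rfl | hm
      · simp [hst]
      · simp [hC']
      · exact hCC' m hm hmj

lemma run_from_D (hend : (ρ.st k).1 = .ExitJ) (hnotime : NoDelayInUrgent ρ)
    {j : ℕ} {y : ℝ} (hj : j ≤ k) (hst : ρ.st j = (.D, y)) :
    j < k ∧ ρ.cost (j + 1) = ρ.cost j ∧
      ((y < 1 ∧ ρ.st (j + 1) = (.A, y)) ∨ (y = 1 ∧ ρ.st (j + 1) = (.E1, 0))) := by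
  obtain ⟨hjk, hnext, hcc⟩ := next_of_ne_exitJ hend hj hst (by decide)
  have hd := hnotime j hjk (by simp [hst])
  rw [hd, add_zero] at hnext
  refine ⟨hjk, by rw [cost_succ_eq hst, hd, hcc]; simp, ?_⟩
  rcases hnext with h | h | ⟨-, hE2⟩
  · exact Or.inl h
  · exact Or.inr h
  · exact absurd (by rw [hE2]) (fst_ne_E2 hend hjk)

lemma run_from_A (hend : (ρ.st k).1 = .ExitJ) (hnotime : NoDelayInUrgent ρ)
    {j : ℕ} {y : ℝ} (hj : j ≤ k) (hst : ρ.st j = (.A, y)) :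
    j + 2 ≤ k ∧ (ρ.st (j + 1)).1 = .B ∧ ρ.st (j + 2) = (.C, 0) ∧
      ρ.cost (j + 2) = ρ.cost j + 3 * (1 - y) := by
  obtain ⟨hjk, hB, hcc⟩ := next_of_ne_exitJ hend hj hst (by decide)
  have hd := hnotime j hjk (by simp [hst])
  rw [hd, add_zero] at hB
  obtain ⟨hj1, hy, hC, hcc1⟩ := next_of_ne_exitJ hend hjk hB (by decide)
  have h0 : ρ.cost (j + 1) = ρ.cost j := by rw [cost_succ_eq hst, hd, hcc]; simp
  have h1 : ρ.cost (j + 1 + 1) = ρ.cost (j + 1) + 3 * ρ.d (j + 1) := by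
    rw [cost_succ_eq hB, hcc1]; simp [Mod12, mul_comm]
  exact ⟨hj1, by rw [hB], hC, (by linarith : ρ.cost (j + 1 + 1) = _)⟩

lemma run_from_E1 (hend : (ρ.st k).1 = .ExitJ) {j : ℕ} {v : ℝ} (hj : j ≤ k)
    (hst : ρ.st j = (.E1, v)) :
    j < k ∧ ∃ u, 0 ≤ u ∧ (ρ.st (j + 1)).1 = .F1 ∧ ρ.cost (j + 1) = ρ.cost j + 3 * u := by
  obtain ⟨hjk, hF, hcc⟩ := next_of_ne_exitJ hend hj hst (by decide)
  refine ⟨hjk, ρ.d j, (ρ.hdel j hjk).1, by rw [hF], ?_⟩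
  rw [cost_succ_eq hst, hcc]
  simp [Mod12, mul_comm]

lemma run_from_F1 (hend : (ρ.st k).1 = .ExitJ) (hnotime : NoDelayInUrgent ρ)
    {j : ℕ} (hj : j ≤ k) (hst : (ρ.st j).1 = .F1) :
    ∃ w, 0 ≤ w ∧ k = j + 3 ∧ (ρ.st (j + 2)).1 = .H1 ∧ ρ.st k = (.ExitJ, w) ∧
      ρ.cost (j + 2) = ρ.cost j + 3 * w := by
  have hst' : ρ.st j = (.F1, (ρ.st j).2) := Prod.ext hst rfl
  obtain ⟨hjk, hG, hcc⟩ := next_of_ne_exitJ hend hj hst' (by decide)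
  obtain ⟨hj1, hH, hcc1⟩ := next_of_ne_exitJ hend hjk hG (by decide)
  obtain ⟨hj2, hexit, hcc2⟩ := next_of_ne_exitJ hend hj1 hH (by decide)
  have hd := hnotime j hjk (by simp [hst])
  have hd2 := hnotime (j + 1 + 1) hj2 (by simp [hH])
  rw [zero_add] at hH
  rw [hd2, add_zero, zero_add] at hexit
  have h0 : ρ.cost (j + 1) = ρ.cost j := by rw [cost_succ_eq hst', hd, hcc]; simp
  have h1 : ρ.cost (j + 1 + 1) = ρ.cost (j + 1) + 3 * ρ.d (j + 1) := by
    rw [cost_succ_eq hG, hcc1]; simp [Mod12, mul_comm]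
  have hk := eq_of_exitJ hj2 hexit
  subst hk
  exact ⟨ρ.d (j + 1), (ρ.hdel _ hj1).1, rfl, by rw [hH], hexit,
    (by linarith : ρ.cost (j + 1 + 1) = _)⟩

lemma exists_cost_sub_eq_three_mul (hend : (ρ.st k).1 = .ExitJ) (hnotime : NoDelayInUrgent ρ)
    (hfollow : ∀ i ≤ k, ((ρ.st i).1 = L12.C0 ∨ (ρ.st i).1 = L12.C') →
      ∃ j, i < j ∧ j ≤ k ∧ ((ρ.st j).1 = L12.C' ∨ (ρ.st j).1 = L12.F1))
    (hcost₂ : ∀ i j : ℕ, i < j → j ≤ k →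
      ((ρ.st i).1 = L12.C0 ∨ (ρ.st i).1 = L12.C') →
      ((ρ.st j).1 = L12.C' ∨ (ρ.st j).1 = L12.F1) →
      (∀ m, i < m → m < j → ¬((ρ.st m).1 = L12.C' ∨ (ρ.st m).1 = L12.F1)) →
      ∑ m ∈ Finset.Ico i j, ρ.stepCost m = 3)
    {i : ℕ} (hi : i ≤ k) (hC0 : (ρ.st i).1 = .C0) :
    ∃ M : ℕ, ρ.cost (k - 3) - ρ.cost i = 3 * M := by
  obtain ⟨M, j, hjk, hF1, hM⟩ := exists_sub_eq_nsmul_of_segment_costs ρ.cost 3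
    (e := fun j => (ρ.st j).1 = .F1) hfollow
    (fun i j hij hjk hi hj hmin => by
      rw [← FinRun.sum_Ico_stepCost ρ hij.le]; exact hcost₂ i j hij hjk hi hj hmin)
    (fun j hj => hj.imp Or.inr id) hi (Or.inl hC0)
  obtain ⟨-, -, hk, -⟩ := run_from_F1 hend hnotime hjk hF1
  refine ⟨M, ?_⟩
  rw [show k - 3 = j by omega, hM, nsmul_eq_mul']

lemma run_loop (hend : (ρ.st k).1 = .ExitJ) (hnotime : NoDelayInUrgent ρ)
    (hcost₁ : ∀ i j : ℕ, i < j → j ≤ k →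
      ((ρ.st i).1 = L12.A ∨ (ρ.st i).1 = L12.A0) → (ρ.st j).1 = L12.D →
      (∀ m, i < m → m < j → (ρ.st m).1 ≠ L12.D) →
      ∑ m ∈ Finset.Ico i j, ρ.stepCost m = 3)
    (hcost₃ : ∀ i j : ℕ, i < j → j ≤ k →
      (ρ.st i).1 = L12.D → (∀ m, i < m → m ≤ k → (ρ.st m).1 ≠ L12.D) →
      (ρ.st j).1 = L12.H1 →
      ∑ m ∈ Finset.Ico i j, ρ.stepCost m = 3)
    {a c : ℕ} {y : ℝ} (hac : a < c) (hck : c ≤ k) (ha : (ρ.st a).1 = .A ∨ (ρ.st a).1 = .A0)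
    (hc : ρ.st c = (.C, 0)) (hnoD : ∀ m, a < m → m < c → (ρ.st m).1 ≠ .D)
    (hcost : ρ.cost c = ρ.cost a + 3 * (1 - y)) :
    ∃ N : ℕ, 1 ≤ N ∧ 3 ^ N * y = 1 ∧ ∃ jF u, k = jF + 3 ∧ 0 ≤ u ∧ u ≤ 1 ∧
      ρ.st k = (.ExitJ, 1 - u) ∧ ρ.cost jF = ρ.cost c + 3 * N + 3 * y + 3 * u - 3 := by
  induction hn : k - a using Nat.strong_induction_on generalizing a c y with
  | _ n ih =>
    obtain ⟨j, hcj, hjk, hD, hCC'⟩ := run_through_C hend hnotime hck hc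
    have hDy : ρ.cost j - ρ.cost c = 3 * y := by
      have h := hcost₁ a j (by omega) hjk ha (by rw [hD]) fun m ham hmj => by
        rcases lt_or_ge m c with hmc | hcm
        · exact hnoD m ham hmc
        · rcases hCC' m hcm hmj with hm | hm <;> rw [hm] <;> decide
      rw [FinRun.sum_Ico_stepCost ρ (by omega)] at h
      linarith
    rw [hDy, zero_add] at hD
    obtain ⟨hjk', hDcost, ⟨hlt, hA⟩ | ⟨heq, hE1⟩⟩ := run_from_D hend hnotime hjk hD
    · obtain ⟨hj3, hB, hC, hAcost⟩ := run_from_A hend hnotime hjk' hA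
      obtain ⟨N, hN, hpow, jF, u, hk, hu, hu1, hexit, hFcost⟩ :=
        ih (k - (j + 1)) (by omega) (by omega) hj3 (Or.inl (by rw [hA])) hC
          (fun m hm hm' => by obtain rfl : m = j + 1 + 1 := (by omega); rw [hB]; decide) hAcost rfl
      refine ⟨N + 1, by omega, by rw [pow_succ, mul_assoc, hpow], jF, u, hk, hu, hu1, hexit, ?_⟩
      push_cast
      linarith
    · obtain ⟨hj1k, u, hu, hF, hE1cost⟩ := run_from_E1 hend hjk' hE1
      obtain ⟨w, hw, hk, hH, hexit, hFcost⟩ := run_from_F1 hend hnotime (by omega) hF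
      have h := hcost₃ j (j + 1 + 1 + 2) (by omega) (by omega) (by rw [hD])
        (fun m hjm hmk => fst_ne_D_of_E1 (by rw [hE1]) (by omega : j + 1 ≤ m) hmk) hH
      rw [FinRun.sum_Ico_stepCost ρ (by omega)] at h
      refine ⟨1, le_rfl, by linarith, j + 1 + 1, u, hk, hu, by linarith, ?_, ?_⟩
      · rwa [show 1 - u = w by linarith]
      · push_cast; linarith

end Mod12

theorem stmt12_general (x₀ x₁ : ℝ)
    (k : ℕ) (ρ : FinRun Mod12 k)
    (hstart : ρ.st 0 = (L12.A0, x₀)) (hend : ρ.st k = (L12.ExitJ, x₁))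
    (hnotime : ∀ i < k,
      (ρ.st i).1 ∈ ([L12.A0, L12.C0, L12.D, L12.A, L12.C', L12.F1, L12.H1] : List L12) →
      ρ.d i = 0)
    (hfollow : ∀ i ≤ k, ((ρ.st i).1 = L12.C0 ∨ (ρ.st i).1 = L12.C') →
      ∃ j, i < j ∧ j ≤ k ∧ ((ρ.st j).1 = L12.C' ∨ (ρ.st j).1 = L12.F1))
    (hcost₁ : ∀ i j : ℕ, i < j → j ≤ k →
      ((ρ.st i).1 = L12.A ∨ (ρ.st i).1 = L12.A0) → (ρ.st j).1 = L12.D →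
      (∀ m, i < m → m < j → (ρ.st m).1 ≠ L12.D) →
      ∑ m ∈ Finset.Ico i j, ρ.stepCost m = 3)
    (hcost₂ : ∀ i j : ℕ, i < j → j ≤ k →
      ((ρ.st i).1 = L12.C0 ∨ (ρ.st i).1 = L12.C') →
      ((ρ.st j).1 = L12.C' ∨ (ρ.st j).1 = L12.F1) →
      (∀ m, i < m → m < j → ¬((ρ.st m).1 = L12.C' ∨ (ρ.st m).1 = L12.F1)) →
      ∑ m ∈ Finset.Ico i j, ρ.stepCost m = 3)
    (hcost₃ : ∀ i j : ℕ, i < j → j ≤ k →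
      (ρ.st i).1 = L12.D → (∀ m, i < m → m ≤ k → (ρ.st m).1 ≠ L12.D) →
      (ρ.st j).1 = L12.H1 →
      ∑ m ∈ Finset.Ico i j, ρ.stepCost m = 3) :
    x₁ = x₀ ∧ ∃ n : ℕ, x₀ = 1 / 3 ^ n := by
  have hendJ : (ρ.st k).1 = .ExitJ := by rw [hend]
  rcases Mod12.run_from_A0 hendJ hnotime (Nat.zero_le k) hstart with
    ⟨rfl, -, hexit⟩ | ⟨hx₀, h3k, hB0, hC0, hC, hB0cost, hC0cost⟩
  · exact ⟨by simpa [hend] using hexit, 0, by norm_num⟩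
  simp only [zero_add] at h3k hB0 hC0 hC hB0cost hC0cost
  obtain ⟨N, -, hpow, jF, u, rfl, hu, hu1, hexit, hFcost⟩ :=
    Mod12.run_loop hendJ hnotime hcost₁ hcost₃ (a := 0) (y := x₀) (by omega) h3k
      (Or.inr (by rw [hstart])) hC
      (fun m _ hm => by rcases (by omega : m = 1 ∨ m = 2) with rfl | rfl <;> simp [hB0, hC0])
      (by linarith)
  obtain ⟨M, hM⟩ := Mod12.exists_cost_sub_eq_three_mul hendJ hnotime hfollow hcost₂ (i := 2)
    (by omega) (by rw [hC0])
  rw [Nat.add_sub_cancel] at hM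
  have hx₀_eq : x₀ = 1 / 3 ^ N := eq_one_div_of_mul_eq_one_right hpow
  have hx₀_pos : 0 < x₀ := by rw [hx₀_eq]; positivity
  have hint : x₀ + u = ((M - N + 1 : ℤ) : ℝ) := by push_cast; linarith
  have hint_pos : (0 : ℤ) < M - N + 1 := by exact_mod_cast hint ▸ (by linarith : 0 < x₀ + u)
  have hint_lt : (M - N + 1 : ℤ) < 2 := by exact_mod_cast hint ▸ (by linarith : x₀ + u < 2)
  obtain h1 : (M - N + 1 : ℤ) = 1 := by omega
  rw [h1, Int.cast_one] at hint
  rw [hend, Prod.mk.injEq] at hexit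
  exact ⟨by linarith [hexit.2], N, hx₀_eq⟩

/-- **Lemma 13.** Suppose a run `ρ` enters the test/decrement module at
`A₀` with clock value `x₀ ≤ 1` and exits towards `Mod_j` with clock value `x₁`, such that:
(i) no time elapses in `A₀, C₀, D, A, C', F₁, H₁`; (ii) every visit to `C₀` or `C'` is
eventually strictly followed by a visit to `C'` or `F₁`; (iii) the accumulated cost equals
exactly `3` along each portion of `ρ` between `A` or `A₀` and the next visit to `D`, along
each portion between `C₀` or `C'` and the next visit to `C'` or `F₁`, and along the portion
between the last visit to `D` and `H₁`. Then `x₁ = x₀` and `x₀ = 3^(-n)` for some `n ∈ ℕ`. -/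
theorem stmt12 (x₀ x₁ : ℝ) (hx₀ : 0 ≤ x₀) (hx₁ : x₀ ≤ 1)
    (k : ℕ) (ρ : FinRun Mod12 k)
    (hstart : ρ.st 0 = (L12.A0, x₀)) (hend : ρ.st k = (L12.ExitJ, x₁))
    (hnotime : ∀ i < k,
      (ρ.st i).1 ∈ ([L12.A0, L12.C0, L12.D, L12.A, L12.C', L12.F1, L12.H1] : List L12) →
      ρ.d i = 0)
    (hfollow : ∀ i ≤ k, ((ρ.st i).1 = L12.C0 ∨ (ρ.st i).1 = L12.C') →
      ∃ j, i < j ∧ j ≤ k ∧ ((ρ.st j).1 = L12.C' ∨ (ρ.st j).1 = L12.F1))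
    (hcost₁ : ∀ i j : ℕ, i < j → j ≤ k →
      ((ρ.st i).1 = L12.A ∨ (ρ.st i).1 = L12.A0) → (ρ.st j).1 = L12.D →
      (∀ m, i < m → m < j → (ρ.st m).1 ≠ L12.D) →
      ∑ m ∈ Finset.Ico i j, ρ.stepCost m = 3)
    (hcost₂ : ∀ i j : ℕ, i < j → j ≤ k →
      ((ρ.st i).1 = L12.C0 ∨ (ρ.st i).1 = L12.C') →
      ((ρ.st j).1 = L12.C' ∨ (ρ.st j).1 = L12.F1) →
      (∀ m, i < m → m < j → ¬((ρ.st m).1 = L12.C' ∨ (ρ.st m).1 = L12.F1)) →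
      ∑ m ∈ Finset.Ico i j, ρ.stepCost m = 3)
    (hcost₃ : ∀ i j : ℕ, i < j → j ≤ k →
      (ρ.st i).1 = L12.D → (∀ m, i < m → m ≤ k → (ρ.st m).1 ≠ L12.D) →
      (ρ.st j).1 = L12.H1 →
      ∑ m ∈ Finset.Ico i j, ρ.stepCost m = 3) :
    x₁ = x₀ ∧ ∃ n : ℕ, x₀ = 1 / 3 ^ n :=
  stmt12_general x₀ x₁ k ρ hstart hend hnotime hfollow hcost₁ hcost₂ hcost₃
end

section
/- Consider the one-clock priced timed automaton of Figure 9 of the paper: locations a (rate 1), ℓ₁ (rate 2), ℓ₂ (rate 4), ℓ₁' (rate 1), ℓ₂' (rate 2), b (rate 1), c (rate 1); transitions (all of discrete cost 0): a→ℓ₁ (x<1), a→ℓ₂ (x≥1), ℓ₁→ℓ₁' (x=2, x:=0), ℓ₂→ℓ₂' (x=2, x:=0), ℓ₁'→b (x<2), ℓ₂'→b (x<2), b→c (x=0), b→a. Let x₀ ∈ (0,2). Then every run from (a,x₀) that leaves a with no delay and reaches b with accumulated cost (from leaving a to arriving in b) exactly equal to 4 arrives in b with clock value 2x₀ if x₀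 < 1 and 2x₀ − 2 if x₀ ≥ 1 (i.e. with the binary expansion of x₀ shifted one bit to the left, dropping the integer bit); conversely such a run exists for every x₀ ∈ (0,2). -/
variable {Q : Type} [Fintype Q]

/-- Locations of the automaton of Figure 9. -/
inductive L15
  | a | l1 | l2 | l1' | l2' | b | c
  deriving DecidableEq

instance instFintypeL15 : Fintype L15 where
  elems := {.a, .l1, .l2, .l1', .l2', .b, .c}
  complete := by intro x; cases x <;> decide

/-- The automaton of Figure 9: rates `a:1, ℓ₁:2, ℓ₂:4, ℓ₁':1, ℓ₂':2, b:1, c:1`;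
transitions (all of discrete cost 0) `a→ℓ₁ (x<1)`, `a→ℓ₂ (x≥1)`, `ℓ₁→ℓ₁' (x=2, x:=0)`,
`ℓ₂→ℓ₂' (x=2, x:=0)`, `ℓ₁'→b (x<2)`, `ℓ₂'→b (x<2)`, `b→c (x=0)`, `b→a`. -/
def Fig9 : PTA L15 where
  init := .a
  E := {e | e ∈ [(⟨.a, [(Cmp.lt, 1)], false, .l1, 0⟩ : PTrans L15),
    ⟨.a, [(Cmp.ge, 1)], false, .l2, 0⟩,
    ⟨.l1, [(Cmp.eq, 2)], true, .l1', 0⟩,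
    ⟨.l2, [(Cmp.eq, 2)], true, .l2', 0⟩,
    ⟨.l1', [(Cmp.lt, 2)], false, .b, 0⟩,
    ⟨.l2', [(Cmp.lt, 2)], false, .b, 0⟩,
    ⟨.b, [(Cmp.eq, 0)], false, .c, 0⟩,
    ⟨.b, [], false, .a, 0⟩]}
  finE := List.finite_toSet _
  Inv := fun _ => []
  rate := fun q => match q with
    | .l2 => 4
    | .l1 | .l2' => 2
    | _ => 1

/-!
Leaving `a` at once, the run enters `ℓ₁` if `x₀ < 1` and `ℓ₂` otherwise, and this is the only
branching. The guard `x = 2` forces a delay `2 - x₀` there, the clock is then reset, and the delay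
in `ℓᵢ'` equals the clock value `y` on arrival in `b`. The cost is thus `2(2 - x₀) + y` or
`4(2 - x₀) + 2y`, and setting it to `4` gives `y = 2x₀` or `y = 2x₀ - 2`; these delays are
admissible since `0 ≤ y < 2`.
-/

lemma DiscMove.of_mem {A : PTA Q} {e : PTrans Q} (he : e ∈ A.E) {v : ℝ}
    (hg : e.guard.sat v) (hinv : (A.Inv e.tgt).sat (if e.reset then 0 else v)) :
    DiscMove A (e.src, v) e.dcost (e.tgt, if e.reset then 0 else v) :=
  ⟨e, he, rfl, rfl, hg, rfl, hinv, rfl⟩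

namespace FinRun

variable {A : PTA Q} {k : ℕ} (ρ : FinRun A k)

lemma lt_of_loc_ne {i : ℕ} (hi : i ≤ k) (h : (ρ.st i).1 ≠ (ρ.st k).1) : i < k :=
  lt_of_le_of_ne hi fun hik => h (by rw [hik])

lemma eq_of_firstVisit (hfirst : ∀ j, 0 < j → j < k → (ρ.st j).1 ≠ (ρ.st k).1) {i : ℕ}
    (hi0 : 0 < i) (hi : i ≤ k) (h : (ρ.st i).1 = (ρ.st k).1) : i = k :=
  hi.eq_of_not_lt fun hik => hfirst i hi0 hik h

end FinRun

namespace Fig9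

lemma inv_sat (q : L15) (v : ℝ) : (Fig9.Inv q).sat v := nofun

lemma discMove_cost {s s' : L15 × ℝ} {c : ℝ} (h : DiscMove Fig9 s c s') : c = 0 := by
  obtain ⟨e, he, -, -, -, -, -, rfl⟩ := h
  simp only [Fig9, List.mem_cons, List.not_mem_nil, or_false, Set.mem_ofPred_eq] at he
  rcases he with rfl | rfl | rfl | rfl | rfl | rfl | rfl | rfl <;> simp

lemma discMove_from_a {v c : ℝ} {s' : L15 × ℝ} (h : DiscMove Fig9 (L15.a, v) c s') :
    (v < 1 ∧ s' = (L15.l1, v)) ∨ (1 ≤ v ∧ s' = (L15.l2, v)) := by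
  obtain ⟨e, he, hsrc, htgt, hg, hv, -, -⟩ := h
  simp only [Fig9, List.mem_cons, List.not_mem_nil, or_false, Set.mem_ofPred_eq] at he
  rcases he with rfl | rfl | rfl | rfl | rfl | rfl | rfl | rfl <;>
    simp_all [PGuard.sat, Cmp.sat, Prod.ext_iff, eq_comm]

lemma discMove_from_l1 {v c : ℝ} {s' : L15 × ℝ} (h : DiscMove Fig9 (L15.l1, v) c s') :
    v = 2 ∧ s' = (L15.l1', 0) := by
  obtain ⟨e, he, hsrc, htgt, hg, hv, -, -⟩ := h
  simp only [Fig9, List.mem_cons, List.not_mem_nil, or_false, Set.mem_ofPred_eq] at he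
  rcases he with rfl | rfl | rfl | rfl | rfl | rfl | rfl | rfl <;>
    simp_all [PGuard.sat, Cmp.sat, Prod.ext_iff, eq_comm]

lemma discMove_from_l2 {v c : ℝ} {s' : L15 × ℝ} (h : DiscMove Fig9 (L15.l2, v) c s') :
    v = 2 ∧ s' = (L15.l2', 0) := by
  obtain ⟨e, he, hsrc, htgt, hg, hv, -, -⟩ := h
  simp only [Fig9, List.mem_cons, List.not_mem_nil, or_false, Set.mem_ofPred_eq] at he
  rcases he with rfl | rfl | rfl | rfl | rfl | rfl | rfl | rfl <;>
    simp_all [PGuard.sat, Cmp.sat, Prod.ext_iff, eq_comm]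

lemma discMove_from_l1' {v c : ℝ} {s' : L15 × ℝ} (h : DiscMove Fig9 (L15.l1', v) c s') :
    s' = (L15.b, v) := by
  obtain ⟨e, he, hsrc, htgt, hg, hv, -, -⟩ := h
  simp only [Fig9, List.mem_cons, List.not_mem_nil, or_false, Set.mem_ofPred_eq] at he
  rcases he with rfl | rfl | rfl | rfl | rfl | rfl | rfl | rfl <;>
    simp_all [Prod.ext_iff]

lemma discMove_from_l2' {v c : ℝ} {s' : L15 × ℝ} (h : DiscMove Fig9 (L15.l2', v) c s') :
    s' = (L15.b, v) := by
  obtain ⟨e, he, hsrc, htgt, hg, hv, -, -⟩ := h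
  simp only [Fig9, List.mem_cons, List.not_mem_nil, or_false, Set.mem_ofPred_eq] at he
  rcases he with rfl | rfl | rfl | rfl | rfl | rfl | rfl | rfl <;>
    simp_all [Prod.ext_iff]

lemma discMove_of_mem {q q' : L15} {g : PGuard} {r : Bool} {v : ℝ}
    (he : ⟨q, g, r, q', 0⟩ ∈ Fig9.E) (hg : g.sat v) :
    DiscMove Fig9 (q, v) 0 (q', if r then 0 else v) := by
  simpa using DiscMove.of_mem he hg (inv_sat _ _)

lemma discMove_a_l1 {v : ℝ} (hv : v < 1) : DiscMove Fig9 (L15.a, v) 0 (L15.l1, v) :=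
  discMove_of_mem (g := [(Cmp.lt, 1)]) (r := false) (by simp [Fig9]) (by simpa [PGuard.sat, Cmp.sat])

lemma discMove_a_l2 {v : ℝ} (hv : 1 ≤ v) : DiscMove Fig9 (L15.a, v) 0 (L15.l2, v) :=
  discMove_of_mem (g := [(Cmp.ge, 1)]) (r := false) (by simp [Fig9]) (by simpa [PGuard.sat, Cmp.sat])

lemma discMove_l1_l1' : DiscMove Fig9 (L15.l1, 2) 0 (L15.l1', 0) :=
  discMove_of_mem (g := [(Cmp.eq, 2)]) (r := true) (by simp [Fig9]) (by simp [PGuard.sat, Cmp.sat])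

lemma discMove_l2_l2' : DiscMove Fig9 (L15.l2, 2) 0 (L15.l2', 0) :=
  discMove_of_mem (g := [(Cmp.eq, 2)]) (r := true) (by simp [Fig9]) (by simp [PGuard.sat, Cmp.sat])

lemma discMove_l1'_b {v : ℝ} (hv : v < 2) : DiscMove Fig9 (L15.l1', v) 0 (L15.b, v) :=
  discMove_of_mem (g := [(Cmp.lt, 2)]) (r := false) (by simp [Fig9]) (by simpa [PGuard.sat, Cmp.sat])

lemma discMove_l2'_b {v : ℝ} (hv : v < 2) : DiscMove Fig9 (L15.l2', v) 0 (L15.b, v) :=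
  discMove_of_mem (g := [(Cmp.lt, 2)]) (r := false) (by simp [Fig9]) (by simpa [PGuard.sat, Cmp.sat])

lemma sum_stepCost_of_firstVisit {k : ℕ} (ρ : FinRun Fig9 k) {p p' : L15} {x : ℝ}
    (hp : ∀ {v c s'}, DiscMove Fig9 (p, v) c s' → v = 2 ∧ s' = (p', 0))
    (hp' : ∀ {v c s'}, DiscMove Fig9 (p', v) c s' → s' = (L15.b, v))
    (hpb : p ≠ L15.b) (hp'b : p' ≠ L15.b) (hk : 1 ≤ k) (hd0 : ρ.d 0 = 0)
    (h1 : ρ.st 1 = (p, x)) (hb : (ρ.st k).1 = L15.b)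
    (hfirst : ∀ i, 0 < i → i < k → (ρ.st i).1 ≠ L15.b) :
    k = 3 ∧ ∑ i ∈ Finset.range k, ρ.stepCost i =
      (2 - x) * Fig9.rate p + (ρ.st k).2 * Fig9.rate p' := by
  rw [← hb] at hfirst
  have hk1 : 1 < k := ρ.lt_of_loc_ne hk (by rw [h1, hb]; exact hpb)
  have hmove1 := ρ.hdisc 1 hk1
  rw [h1] at hmove1
  obtain ⟨hd1, h2⟩ := hp hmove1
  have hk2 : 2 < k := ρ.lt_of_loc_ne hk1 (by rw [h2, hb]; exact hp'b)
  have hmove2 := ρ.hdisc 2 hk2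
  rw [h2] at hmove2
  have h3 := hp' hmove2
  obtain rfl : 3 = k := ρ.eq_of_firstVisit hfirst three_pos hk2 (by rw [h3, hb])
  have hcc : ∀ i < 3, ρ.cc i = 0 := fun i hi => discMove_cost (ρ.hdisc i hi)
  have hd1' : ρ.d 1 = 2 - x := by simp only at hd1; linarith
  refine ⟨rfl, ?_⟩
  simp only [Finset.sum_range_succ, Finset.sum_range_zero, FinRun.stepCost, h1, h2, h3, hd0,
    hd1', hcc 0 three_pos, hcc 1 (by norm_num), hcc 2 (by norm_num)]
  ring

lemma exists_run_via (p p' : L15) {x y : ℝ} (hx : x ≤ 2) (hy : 0 ≤ y)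
    (hpb : p ≠ L15.b) (hp'b : p' ≠ L15.b)
    (h₀ : DiscMove Fig9 (L15.a, x) 0 (p, x)) (h₁ : DiscMove Fig9 (p, 2) 0 (p', 0))
    (h₂ : DiscMove Fig9 (p', y) 0 (L15.b, y)) :
    ∃ ρ : FinRun Fig9 3, ρ.st 0 = (L15.a, x) ∧ ρ.d 0 = 0 ∧ ρ.st 3 = (L15.b, y) ∧
      (∀ i, 0 < i → i < 3 → (ρ.st i).1 ≠ L15.b) ∧
      ∑ i ∈ Finset.range 3, ρ.stepCost i = (2 - x) * Fig9.rate p + y * Fig9.rate p' := by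
  refine ⟨⟨fun | 0 => (L15.a, x) | 1 => (p, x) | 2 => (p', 0) | _ => (L15.b, y),
    fun | 0 => 0 | 1 => 2 - x | 2 => y | _ => 0, fun _ => 0, ?_, ?_⟩,
    rfl, rfl, rfl, ?_, ?_⟩
  · intro i hi
    refine ⟨?_, fun _ _ _ => inv_sat _ _⟩
    interval_cases i <;> simp only [le_refl, sub_nonneg, hx, hy]
  · intro i hi
    interval_cases i
    · simpa using h₀
    · simpa using h₁
    · simpa using h₂
  · intro i hi0 hi3
    interval_cases i <;> assumption
  · simp only [Finset.sum_range_succ, Finset.sum_range_zero, FinRun.stepCost]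
    ring

end Fig9

/-- For `x₀ ∈ (0,2)`, every run of the Figure 9 automaton from `(a, x₀)`
that leaves `a` with no delay and reaches `b` (for the first time) with accumulated cost
exactly `4` arrives in `b` with clock value `2·x₀` if `x₀ < 1` and `2·x₀ − 2` if `x₀ ≥ 1`;
and conversely such a run exists. -/
theorem stmt15 (x₀ : ℝ) (h₀ : 0 < x₀) (h₂ : x₀ < 2) :
    (∀ (k : ℕ) (ρ : FinRun Fig9 k), 1 ≤ k →
      ρ.st 0 = (L15.a, x₀) → ρ.d 0 = 0 →
      (ρ.st k).1 = L15.b → (∀ i, 0 < i → i < k → (ρ.st i).1 ≠ L15.b) →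
      ∑ i ∈ Finset.range k, ρ.stepCost i = 4 →
      (ρ.st k).2 = if x₀ < 1 then 2 * x₀ else 2 * x₀ - 2) ∧
    (∃ (k : ℕ) (ρ : FinRun Fig9 k), 1 ≤ k ∧
      ρ.st 0 = (L15.a, x₀) ∧ ρ.d 0 = 0 ∧
      (ρ.st k).1 = L15.b ∧ (∀ i, 0 < i → i < k → (ρ.st i).1 ≠ L15.b) ∧
      ∑ i ∈ Finset.range k, ρ.stepCost i = 4) := by
  constructor
  · intro k ρ hk h0 hd0 hb hfirst hsum
    have hmove0 := ρ.hdisc 0 hk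
    rw [h0, hd0, add_zero] at hmove0
    rcases Fig9.discMove_from_a hmove0 with ⟨hx, h1⟩ | ⟨hx, h1⟩
    · obtain ⟨-, hcost⟩ := Fig9.sum_stepCost_of_firstVisit ρ Fig9.discMove_from_l1
        Fig9.discMove_from_l1' (by decide) (by decide) hk hd0 h1 hb hfirst
      norm_num [hcost, Fig9] at hsum
      rw [if_pos hx]
      linarith
    · obtain ⟨-, hcost⟩ := Fig9.sum_stepCost_of_firstVisit ρ Fig9.discMove_from_l2
        Fig9.discMove_from_l2' (by decide) (by decide) hk hd0 h1 hb hfirst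
      norm_num [hcost, Fig9] at hsum
      rw [if_neg hx.not_gt]
      linarith
  · rcases lt_or_ge x₀ 1 with hx | hx
    · obtain ⟨ρ, h0, hd0, h3, hfirst, hcost⟩ := Fig9.exists_run_via L15.l1 L15.l1' h₂.le
        (by positivity) (by decide) (by decide) (Fig9.discMove_a_l1 hx) Fig9.discMove_l1_l1'
        (Fig9.discMove_l1'_b (v := 2 * x₀) (by linarith))
      refine ⟨3, ρ, by norm_num, h0, hd0, by rw [h3], hfirst, ?_⟩
      norm_num [hcost, Fig9]
      ring
    · obtain ⟨ρ, h0, hd0, h3, hfirst, hcost⟩ := Fig9.exists_run_via L15.l2 L15.l2' h₂.le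
        (by linarith) (by decide) (by decide) (Fig9.discMove_a_l2 hx) Fig9.discMove_l2_l2'
        (Fig9.discMove_l2'_b (v := 2 * x₀ - 2) (by linarith))
      refine ⟨3, ρ, by norm_num, h0, hd0, by rw [h3], hfirst, ?_⟩
      norm_num [hcost, Fig9]
      ring
end
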